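/- arXiv:2310.04967 — 8 statements merged into one kernel-verified Lean document; each statement's English description precedes it below -/
import Mathlib

section
/- Let B be a real-valued stochastic process with B_0 = 0, independent increments over disjoint intervals, and B_t − B_s Gaussian with mean 0 and variance t − s for all 0 ≤ s ≤ t. Fix ε > 0 and let B̄ be the polygonal interpolation of B on the mesh t_n = nε. Then for every real q ≥ 1 there is a finite constant c_q, depending only on q (and not on ε or t), such that sup_{t ≥ 0} E[|B_t − B̄_t|^q]^{1/q} ≤ c_q √ε. -/
/-! On `[t_n, t_{n+1}]`, with `θ = (t - t_n)/ε ∈ [0, 1]`,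
`B_t - B̄_t = (1 - θ)(B_t - B_{t_n}) - θ(B_{t_{n+1}} - B_t)`: a combination, with coefficients
in `[0, 1]`, of two centred Gaussians of variance at most `ε`. A centred Gaussian of variance `v`
has `L^q` norm `√v ‖N(0,1)‖_q`, so Minkowski's inequality gives `c_q = 2 ‖N(0,1)‖_q`. -/

open MeasureTheory ProbabilityTheory

/-- The polygonal (piecewise linear) interpolation of a process `B` on the uniform
mesh `t_n = nε`. -/
noncomputable def polygonal {Ω : Type*} (ε : ℝ) (B : ℝ → Ω → ℝ) (t : ℝ) (ω : Ω) : ℝ :=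
  B ((⌊t/ε⌋₊ : ℝ) * ε) ω
    + ((t - (⌊t/ε⌋₊ : ℝ) * ε)/ε)
      * (B (((⌊t/ε⌋₊ : ℝ) + 1) * ε) ω - B ((⌊t/ε⌋₊ : ℝ) * ε) ω)

open scoped ENNReal NNReal

lemma ProbabilityTheory.HasLaw.eLpNorm_eq {Ω : Type*} [MeasurableSpace Ω] {P : Measure Ω}
    {X : Ω → ℝ} {μ : Measure ℝ} (hX : HasLaw X μ P) (p : ℝ≥0∞) :
    eLpNorm X p P = eLpNorm id p μ := by
  rw [← hX.map_eq, eLpNorm_map_measure aestronglyMeasurable_id hX.aemeasurable]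
  rfl

lemma gaussianReal_zero_eq_map_const_mul (v : ℝ≥0) :
    gaussianReal 0 v = (gaussianReal 0 1).map (Real.sqrt v * ·) := by
  rw [gaussianReal_map_const_mul, mul_zero, mul_one]
  congr
  ext
  simp

lemma eLpNorm_id_gaussianReal (v : ℝ≥0) (p : ℝ≥0∞) :
    eLpNorm id p (gaussianReal 0 v)
      = ENNReal.ofReal (Real.sqrt v) * eLpNorm id p (gaussianReal 0 1) := by
  rw [gaussianReal_zero_eq_map_const_mul,
    eLpNorm_map_measure aestronglyMeasurable_id (by fun_prop),
    show id ∘ (Real.sqrt v * ·) = Real.sqrt v • id from rfl, eLpNorm_const_smul,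
    Real.enorm_eq_ofReal_abs, abs_of_nonneg (Real.sqrt_nonneg _)]

lemma ProbabilityTheory.HasLaw.eLpNorm_le_of_gaussianReal {Ω : Type*} [MeasurableSpace Ω]
    {P : Measure Ω} {X : Ω → ℝ} {v : ℝ≥0} (hX : HasLaw X (gaussianReal 0 v) P) {w : ℝ}
    (hvw : v ≤ w) (p : ℝ≥0∞) :
    eLpNorm X p P ≤ ENNReal.ofReal (Real.sqrt w) * eLpNorm id p (gaussianReal 0 1) := by
  rw [hX.eLpNorm_eq, eLpNorm_id_gaussianReal]
  gcongr

lemma MeasureTheory.MemLp.toReal_eLpNorm_eq_integral_abs_rpow {α : Type*} [MeasurableSpace α]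
    {μ : Measure α} {f : α → ℝ} {q : ℝ} (hq : 0 < q) (hf : MemLp f (.ofReal q) μ) :
    (eLpNorm f (.ofReal q) μ).toReal = (∫ x, |f x| ^ q ∂μ) ^ (1 / q) := by
  rw [hf.eLpNorm_eq_integral_rpow_norm (by simpa using hq) ENNReal.ofReal_ne_top,
    ENNReal.toReal_ofReal (by positivity), ENNReal.toReal_ofReal hq.le, one_div]
  simp only [Real.norm_eq_abs]

lemma sub_polygonal_eq {Ω : Type*} (ε : ℝ) (B : ℝ → Ω → ℝ) (t : ℝ) :
    let a := (⌊t / ε⌋₊ : ℝ) * ε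
    let θ := (t - a) / ε
    (fun ω => B t ω - polygonal ε B t ω)
      = (1 - θ) • (fun ω => B t ω - B a ω) - θ • (fun ω => B (a + ε) ω - B t ω) := by
  intro a θ
  ext ω
  simp only [polygonal, Pi.sub_apply, Pi.smul_apply, smul_eq_mul, a, θ, add_one_mul]
  ring

lemma floor_div_mul_le_and_le_add {t ε : ℝ} (ht : 0 ≤ t) (hε : 0 < ε) :
    (⌊t / ε⌋₊ : ℝ) * ε ≤ t ∧ t ≤ ⌊t / ε⌋₊ * ε + ε := by
  refine ⟨(le_div_iff₀ hε).1 (Nat.floor_le (by positivity)), ?_⟩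
  rw [← add_one_mul, ← div_le_iff₀ hε]
  exact (Nat.lt_floor_add_one _).le

lemma eLpNorm_sub_polygonal_le {Ω : Type*} [MeasurableSpace Ω] {μ : Measure Ω}
    {B : ℝ → Ω → ℝ} {ε : ℝ} (hε : 0 < ε)
    (hB : ∀ s t, 0 ≤ s → s ≤ t →
      HasLaw (fun ω => B t ω - B s ω) (gaussianReal 0 (t - s).toNNReal) μ)
    {t : ℝ} (ht : 0 ≤ t) {p : ℝ≥0∞} (hp : 1 ≤ p) :
    eLpNorm (fun ω => B t ω - polygonal ε B t ω) p μ
      ≤ 2 * ENNReal.ofReal (Real.sqrt ε) * eLpNorm id p (gaussianReal 0 1) := by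
  set a := (⌊t / ε⌋₊ : ℝ) * ε
  set θ := (t - a) / ε
  have ha₀ : 0 ≤ a := by positivity
  obtain ⟨hat, hta⟩ := floor_div_mul_le_and_le_add ht hε
  have hθ₀ : 0 ≤ θ := div_nonneg (by linarith) hε.le
  have hθ₁ : θ ≤ 1 := (div_le_one hε).2 (by linarith)
  have hX := hB a t ha₀ hat
  have hY := hB t (a + ε) ht hta
  have hvar : ∀ s r : ℝ, r - s ≤ ε → ((r - s).toNNReal : ℝ) ≤ ε := fun s r h => by
    rw [Real.coe_toNNReal']
    exact max_le h hε.le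
  have henorm_le_one : ∀ x : ℝ, 0 ≤ x → x ≤ 1 → ‖x‖ₑ ≤ 1 := fun x hx₀ hx₁ => by
    rw [Real.enorm_eq_ofReal_abs, abs_of_nonneg hx₀]
    exact ENNReal.ofReal_le_one.2 hx₁
  rw [sub_polygonal_eq]
  calc _ ≤ eLpNorm ((1 - θ) • fun ω => B t ω - B a ω) p μ
        + eLpNorm (θ • fun ω => B (a + ε) ω - B t ω) p μ :=
        eLpNorm_sub_le (hX.aemeasurable.aestronglyMeasurable.const_smul _)
          (hY.aemeasurable.aestronglyMeasurable.const_smul _) hp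
    _ ≤ 1 * (ENNReal.ofReal (Real.sqrt ε) * eLpNorm id p (gaussianReal 0 1))
        + 1 * (ENNReal.ofReal (Real.sqrt ε) * eLpNorm id p (gaussianReal 0 1)) := by
        rw [eLpNorm_const_smul, eLpNorm_const_smul]
        gcongr
        · exact henorm_le_one _ (by linarith) (by linarith)
        · exact hX.eLpNorm_le_of_gaussianReal (hvar a t (by linarith)) p
        · exact henorm_le_one _ hθ₀ hθ₁
        · exact hY.eLpNorm_le_of_gaussianReal (hvar t (a + ε) (by linarith)) p
    _ = _ := by ring

/-- Time-uniform moment bound for the polygonal approximation: for every `q ≥ 1` there is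
a constant `c_q`, depending only on `q` (not on the process, on `ε`, or on `t`), with
`sup_{t ≥ 0} E[|B_t − B̄_t|^q]^{1/q} ≤ c_q √ε` for every process `B` with `B_0 = 0` and
independent Gaussian increments of variance `t − s`, and every mesh size `ε > 0`. -/
theorem stmt_1 :
    ∀ q : ℝ, 1 ≤ q → ∃ c : ℝ,
      ∀ (Ω : Type) [MeasurableSpace Ω] (μ : Measure Ω), IsProbabilityMeasure μ →
      ∀ (B : ℝ → Ω → ℝ), (∀ t, Measurable (B t)) → (∀ ω, B 0 ω = 0) →
      ∀ ε : ℝ, 0 < ε →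
      (∀ s t : ℝ, 0 ≤ s → s ≤ t →
        Measure.map (fun ω => B t ω - B s ω) μ = gaussianReal 0 (Real.toNNReal (t - s))) →
      (∀ s₁ t₁ s₂ t₂ : ℝ, 0 ≤ s₁ → s₁ ≤ t₁ → t₁ ≤ s₂ → s₂ ≤ t₂ →
        IndepFun (fun ω => B t₁ ω - B s₁ ω) (fun ω => B t₂ ω - B s₂ ω) μ) →
      ∀ t : ℝ, 0 ≤ t →
        (∫ ω, |B t ω - polygonal ε B t ω| ^ q ∂μ) ^ (1/q) ≤ c * Real.sqrt ε := by
  intro q hq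
  set K := eLpNorm id (.ofReal q) (gaussianReal 0 1)
  refine ⟨2 * K.toReal, fun Ω _ μ _ B hB _ ε hε hgauss _ t ht => ?_⟩
  have hK : K ≠ ∞ := (memLp_id_gaussianReal' _ ENNReal.ofReal_ne_top).eLpNorm_ne_top
  have hbound := eLpNorm_sub_polygonal_le hε
    (fun s t hs hst => ⟨by fun_prop, hgauss s t hs hst⟩) ht (ENNReal.one_le_ofReal.2 hq)
  have hmem : MemLp (fun ω => B t ω - polygonal ε B t ω) (.ofReal q) μ :=
    ⟨by unfold polygonal; fun_prop, hbound.trans_lt (by finiteness)⟩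
  rw [← hmem.toReal_eLpNorm_eq_integral_abs_rpow (by linarith)]
  calc _ ≤ (2 * ENNReal.ofReal (Real.sqrt ε) * K).toReal :=
        ENNReal.toReal_mono (by finiteness) hbound
    _ = 2 * K.toReal * Real.sqrt ε := by
        rw [ENNReal.toReal_mul, ENNReal.toReal_mul, ENNReal.toReal_ofReal (Real.sqrt_nonneg _),
          ENNReal.toReal_ofNat]
        ring
end

section
/- For a ∈ ℝ and ε > 0, let m := (1/ε)∫_0^ε e^{au} du and v(a,ε) := (1/ε)∫_0^ε (e^{as} − m)^2 ds. Then v(a,ε) = (1/(2ε^2)) ∫_0^ε ∫_0^ε (e^{as} − e^{au})^2 du ds, and moreover (a^2 ε^2 / 12) · min(1, e^{2aε}) ≤ v(a,ε) ≤ (a^2 ε^2 / 12) · max(1, e^{2aε}). -/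
open intervalIntegral MeasureTheory

lemma exp_sub_sq_bounds_le (b x y : ℝ) (hx1 : min 0 b ≤ x) (hy2 : y ≤ max 0 b) (hxy : x ≤ y) :
    (x - y)^2 * min 1 (Real.exp (2*b)) ≤ (Real.exp x - Real.exp y)^2 ∧
    (Real.exp x - Real.exp y)^2 ≤ (x - y)^2 * max 1 (Real.exp (2*b)) := by
  have hxy' : Real.exp x * Real.exp (y - x) = Real.exp y := by
    rw [← Real.exp_add]; ring_nf
  have hyx' : Real.exp y * Real.exp (x - y) = Real.exp x := by
    rw [← Real.exp_add]; ring_nf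
  have k1 : Real.exp x * (y - x) ≤ Real.exp y - Real.exp x := by
    nlinarith [Real.add_one_le_exp (y - x), Real.exp_pos x]
  have k2 : Real.exp y - Real.exp x ≤ Real.exp y * (y - x) := by
    nlinarith [Real.add_one_le_exp (x - y), Real.exp_pos y]
  have e2b : Real.exp (2*b) = Real.exp b * Real.exp b := by rw [two_mul, Real.exp_add]
  rcases le_total 0 b with hb | hb
  · have hx : 0 ≤ x := by rwa [min_eq_left hb] at hx1
    have hy : y ≤ b := by rwa [max_eq_right hb] at hy2
    have h1 : (1:ℝ) ≤ Real.exp x := Real.one_le_exp hx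
    have hey : Real.exp y ≤ Real.exp b := Real.exp_le_exp.mpr hy
    have hmin : min 1 (Real.exp (2*b)) = 1 := min_eq_left (Real.one_le_exp (by linarith))
    have hmax : max 1 (Real.exp (2*b)) = Real.exp (2*b) :=
      max_eq_right (Real.one_le_exp (by linarith))
    have hd0 : 0 ≤ Real.exp y - Real.exp x := by nlinarith [Real.exp_pos x]
    constructor
    · rw [hmin]; nlinarith [Real.exp_pos x]
    · rw [hmax, e2b]
      have hd2 : Real.exp y - Real.exp x ≤ Real.exp b * (y - x) := by
        nlinarith [Real.exp_pos y]
      nlinarith [Real.exp_pos b]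
  · have hx : b ≤ x := by rwa [min_eq_right hb] at hx1
    have hy : y ≤ 0 := by rwa [max_eq_left hb] at hy2
    have h1 : Real.exp y ≤ 1 := Real.exp_le_one_iff.mpr hy
    have hex : Real.exp b ≤ Real.exp x := Real.exp_le_exp.mpr hx
    have hmin : min 1 (Real.exp (2*b)) = Real.exp (2*b) :=
      min_eq_right (Real.exp_le_one_iff.mpr (by linarith))
    have hmax : max 1 (Real.exp (2*b)) = 1 :=
      max_eq_left (Real.exp_le_one_iff.mpr (by linarith))
    have hd0 : 0 ≤ Real.exp y - Real.exp x := by nlinarith [Real.exp_pos x]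
    constructor
    · rw [hmin, e2b]
      have hd1 : Real.exp b * (y - x) ≤ Real.exp y - Real.exp x := by
        nlinarith [Real.exp_pos b]
      nlinarith [Real.exp_pos b, mul_nonneg (Real.exp_pos b).le (sub_nonneg.mpr hxy)]
    · rw [hmax]
      have hd2 : Real.exp y - Real.exp x ≤ (y - x) := by nlinarith [Real.exp_pos y]
      nlinarith

lemma exp_sub_sq_bounds (b x y : ℝ) (hx1 : min 0 b ≤ x) (hx2 : x ≤ max 0 b)
    (hy1 : min 0 b ≤ y) (hy2 : y ≤ max 0 b) :
    (x - y)^2 * min 1 (Real.exp (2*b)) ≤ (Real.exp x - Real.exp y)^2 ∧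
    (Real.exp x - Real.exp y)^2 ≤ (x - y)^2 * max 1 (Real.exp (2*b)) := by
  rcases le_total x y with h | h
  · exact exp_sub_sq_bounds_le b x y hx1 hy2 h
  · have H := exp_sub_sq_bounds_le b y x hy1 hx2 h
    have e1 : (x - y)^2 = (y - x)^2 := by ring
    have e2 : (Real.exp x - Real.exp y)^2 = (Real.exp y - Real.exp x)^2 := by ring
    rw [e1, e2]; exact H

/-- For `a ∈ ℝ` and `ε > 0`, with `m := (1/ε)∫_0^ε e^{au} du`, the per-interval variance
`v(a,ε) := (1/ε)∫_0^ε (e^{as} − m)² ds` equals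
`(1/(2ε²)) ∫_0^ε ∫_0^ε (e^{as} − e^{au})² du ds`, and
`(a²ε²/12)·min(1, e^{2aε}) ≤ v(a,ε) ≤ (a²ε²/12)·max(1, e^{2aε})`. -/
theorem stmt_2 (a ε : ℝ) (hε : 0 < ε) :
    (1/ε) * (∫ s in (0:ℝ)..ε,
        (Real.exp (a*s) - (1/ε) * ∫ u in (0:ℝ)..ε, Real.exp (a*u))^2)
      = (1/(2*ε^2)) * ∫ s in (0:ℝ)..ε, ∫ u in (0:ℝ)..ε,
          (Real.exp (a*s) - Real.exp (a*u))^2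
    ∧ (a^2 * ε^2 / 12) * min 1 (Real.exp (2*a*ε))
        ≤ (1/ε) * ∫ s in (0:ℝ)..ε,
            (Real.exp (a*s) - (1/ε) * ∫ u in (0:ℝ)..ε, Real.exp (a*u))^2
    ∧ (1/ε) * (∫ s in (0:ℝ)..ε,
          (Real.exp (a*s) - (1/ε) * ∫ u in (0:ℝ)..ε, Real.exp (a*u))^2)
        ≤ (a^2 * ε^2 / 12) * max 1 (Real.exp (2*a*ε)) := by
  set I1 := ∫ u in (0:ℝ)..ε, Real.exp (a*u) with hI1
  set I2 := ∫ u in (0:ℝ)..ε, Real.exp (a*u)^2 with hI2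
  have hce : IntervalIntegrable (fun s => Real.exp (a*s)) volume 0 ε :=
    (by fun_prop : Continuous fun s : ℝ => Real.exp (a*s)).intervalIntegrable _ _
  have hce2 : IntervalIntegrable (fun s => Real.exp (a*s)^2) volume 0 ε :=
    (by fun_prop : Continuous fun s : ℝ => Real.exp (a*s)^2).intervalIntegrable _ _
  have key : ∀ c : ℝ, (∫ s in (0:ℝ)..ε, (Real.exp (a*s) - c)^2) = I2 - 2*c*I1 + ε*c^2 := by
    intro c
    have h1 : (∫ s in (0:ℝ)..ε, (Real.exp (a*s) - c)^2)
        = ∫ s in (0:ℝ)..ε, (Real.exp (a*s)^2 - (2*c)*Real.exp (a*s) + c^2) :=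
      intervalIntegral.integral_congr (fun s _ => by ring)
    rw [h1, intervalIntegral.integral_add (hce2.sub (hce.const_mul _)) intervalIntegrable_const,
      intervalIntegral.integral_sub hce2 (hce.const_mul _),
      intervalIntegral.integral_const_mul, intervalIntegral.integral_const,
      ← hI1, ← hI2]
    simp only [smul_eq_mul]; ring
  have inner_eq : ∀ s : ℝ, (∫ u in (0:ℝ)..ε, (Real.exp (a*s) - Real.exp (a*u))^2)
      = ε*Real.exp (a*s)^2 - 2*Real.exp (a*s)*I1 + I2 := by
    intro s
    have h1 : (∫ u in (0:ℝ)..ε, (Real.exp (a*s) - Real.exp (a*u))^2)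
        = ∫ u in (0:ℝ)..ε, (Real.exp (a*u) - Real.exp (a*s))^2 :=
      intervalIntegral.integral_congr (fun u _ => by ring)
    rw [h1, key (Real.exp (a*s))]; ring
  have douter : (∫ s in (0:ℝ)..ε, ∫ u in (0:ℝ)..ε, (Real.exp (a*s) - Real.exp (a*u))^2)
      = 2*ε*I2 - 2*I1^2 := by
    rw [intervalIntegral.integral_congr (fun s _ => inner_eq s)]
    have h1 : (∫ s in (0:ℝ)..ε, (ε*Real.exp (a*s)^2 - 2*Real.exp (a*s)*I1 + I2))
        = ∫ s in (0:ℝ)..ε, (ε*Real.exp (a*s)^2 - (2*I1)*Real.exp (a*s) + I2) :=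
      intervalIntegral.integral_congr (fun s _ => by ring)
    rw [h1, intervalIntegral.integral_add ((hce2.const_mul _).sub (hce.const_mul _))
        intervalIntegrable_const,
      intervalIntegral.integral_sub (hce2.const_mul _) (hce.const_mul _),
      intervalIntegral.integral_const_mul, intervalIntegral.integral_const_mul,
      intervalIntegral.integral_const, ← hI1, ← hI2]
    simp only [smul_eq_mul]; ring
  have part1 : (1/ε) * (∫ s in (0:ℝ)..ε, (Real.exp (a*s) - (1/ε) * I1)^2)
      = (1/(2*ε^2)) * ∫ s in (0:ℝ)..ε, ∫ u in (0:ℝ)..ε,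
          (Real.exp (a*s) - Real.exp (a*u))^2 := by
    rw [key ((1/ε) * I1), douter]
    field_simp
    ring
  -- pointwise bounds
  have hmem : ∀ s ∈ Set.Icc (0:ℝ) ε, min 0 (a*ε) ≤ a*s ∧ a*s ≤ max 0 (a*ε) := by
    intro s hs
    rcases le_total 0 a with ha | ha
    · exact ⟨le_trans (min_le_left _ _) (by nlinarith [hs.1]),
        le_trans (by nlinarith [hs.2]) (le_max_right _ _)⟩
    · exact ⟨le_trans (min_le_right _ _) (by nlinarith [hs.2]),
        le_trans (by nlinarith [hs.1]) (le_max_left _ _)⟩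
  have h2ae : 2*(a*ε) = 2*a*ε := by ring
  have pw : ∀ s ∈ Set.Icc (0:ℝ) ε, ∀ u ∈ Set.Icc (0:ℝ) ε,
      a^2*(s-u)^2 * min 1 (Real.exp (2*a*ε)) ≤ (Real.exp (a*s) - Real.exp (a*u))^2 ∧
      (Real.exp (a*s) - Real.exp (a*u))^2 ≤ a^2*(s-u)^2 * max 1 (Real.exp (2*a*ε)) := by
    intro s hs u hu
    have H := exp_sub_sq_bounds (a*ε) (a*s) (a*u) (hmem s hs).1 (hmem s hs).2
      (hmem u hu).1 (hmem u hu).2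
    rw [h2ae] at H
    have e1 : (a*s - a*u)^2 = a^2*(s-u)^2 := by ring
    rw [e1] at H
    exact H
  have Ppoly : ∀ s : ℝ, (∫ u in (0:ℝ)..ε, (s-u)^2) = ε*s^2 - ε^2*s + ε^3/3 := by
    intro s
    have h1 : (∫ u in (0:ℝ)..ε, (s-u)^2)
        = ∫ u in (0:ℝ)..ε, (s^2 - (2*s)*u + u^2) :=
      intervalIntegral.integral_congr (fun u _ => by ring)
    have hid : IntervalIntegrable (fun u : ℝ => u) volume 0 ε :=
      (continuous_id).intervalIntegrable _ _
    rw [h1, intervalIntegral.integral_add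
        (intervalIntegrable_const.sub (hid.const_mul _))
        ((continuous_pow 2).intervalIntegrable _ _),
      intervalIntegral.integral_sub intervalIntegrable_const (hid.const_mul _),
      intervalIntegral.integral_const_mul, intervalIntegral.integral_const,
      integral_id, integral_pow]
    simp only [smul_eq_mul]
    norm_num; ring
  have Ppoly2 : (∫ s in (0:ℝ)..ε, (ε*s^2 - ε^2*s + ε^3/3)) = ε^4/6 := by
    have hid : IntervalIntegrable (fun u : ℝ => u) volume 0 ε :=
      (continuous_id).intervalIntegrable _ _
    have hsq : IntervalIntegrable (fun u : ℝ => u^2) volume 0 ε :=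
      ((continuous_pow 2)).intervalIntegrable _ _
    rw [intervalIntegral.integral_add ((hsq.const_mul _).sub (hid.const_mul _))
        intervalIntegrable_const,
      intervalIntegral.integral_sub (hsq.const_mul _) (hid.const_mul _),
      intervalIntegral.integral_const_mul, intervalIntegral.integral_const_mul,
      intervalIntegral.integral_const, integral_id, integral_pow]
    simp only [smul_eq_mul]
    norm_num; ring
  have intB : IntervalIntegrable
      (fun s => ∫ u in (0:ℝ)..ε, (Real.exp (a*s) - Real.exp (a*u))^2) volume 0 ε := by
    have h1 : (fun s => ∫ u in (0:ℝ)..ε, (Real.exp (a*s) - Real.exp (a*u))^2)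
        = fun s => ε*Real.exp (a*s)^2 - 2*Real.exp (a*s)*I1 + I2 := funext inner_eq
    rw [h1]
    exact (by fun_prop :
      Continuous fun s : ℝ => ε*Real.exp (a*s)^2 - 2*Real.exp (a*s)*I1 + I2).intervalIntegrable _ _
  have intC : ∀ s : ℝ, IntervalIntegrable
      (fun u => (Real.exp (a*s) - Real.exp (a*u))^2) volume 0 ε := fun s =>
    (by fun_prop : Continuous fun u : ℝ => (Real.exp (a*s) - Real.exp (a*u))^2).intervalIntegrable _ _
  -- lower bound on the double integral
  have Dlo : a^2 * min 1 (Real.exp (2*a*ε)) * (ε^4/6)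
      ≤ ∫ s in (0:ℝ)..ε, ∫ u in (0:ℝ)..ε, (Real.exp (a*s) - Real.exp (a*u))^2 := by
    have ilo : ∀ s ∈ Set.Icc (0:ℝ) ε,
        a^2 * min 1 (Real.exp (2*a*ε)) * (ε*s^2 - ε^2*s + ε^3/3)
        ≤ ∫ u in (0:ℝ)..ε, (Real.exp (a*s) - Real.exp (a*u))^2 := by
      intro s hs
      have h1 : a^2 * min 1 (Real.exp (2*a*ε)) * (ε*s^2 - ε^2*s + ε^3/3)
          = ∫ u in (0:ℝ)..ε, (a^2 * min 1 (Real.exp (2*a*ε))) * (s-u)^2 := by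
        rw [intervalIntegral.integral_const_mul, Ppoly s]
      rw [h1]
      refine intervalIntegral.integral_mono_on hε.le
        ((by fun_prop : Continuous fun u : ℝ =>
          (a^2 * min 1 (Real.exp (2*a*ε))) * (s-u)^2).intervalIntegrable _ _)
        (intC s) (fun u hu => ?_)
      have := (pw s hs u hu).1
      linarith [this]
    calc a^2 * min 1 (Real.exp (2*a*ε)) * (ε^4/6)
        = ∫ s in (0:ℝ)..ε, (a^2 * min 1 (Real.exp (2*a*ε))) * (ε*s^2 - ε^2*s + ε^3/3) := by
          rw [intervalIntegral.integral_const_mul, Ppoly2]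
      _ ≤ _ := intervalIntegral.integral_mono_on hε.le
          ((by fun_prop : Continuous fun s : ℝ =>
            (a^2 * min 1 (Real.exp (2*a*ε))) * (ε*s^2 - ε^2*s + ε^3/3)).intervalIntegrable _ _)
          intB ilo
  -- upper bound on the double integral
  have Dhi : (∫ s in (0:ℝ)..ε, ∫ u in (0:ℝ)..ε, (Real.exp (a*s) - Real.exp (a*u))^2)
      ≤ a^2 * max 1 (Real.exp (2*a*ε)) * (ε^4/6) := by
    have ihi : ∀ s ∈ Set.Icc (0:ℝ) ε,
        (∫ u in (0:ℝ)..ε, (Real.exp (a*s) - Real.exp (a*u))^2)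
        ≤ a^2 * max 1 (Real.exp (2*a*ε)) * (ε*s^2 - ε^2*s + ε^3/3) := by
      intro s hs
      have h1 : a^2 * max 1 (Real.exp (2*a*ε)) * (ε*s^2 - ε^2*s + ε^3/3)
          = ∫ u in (0:ℝ)..ε, (a^2 * max 1 (Real.exp (2*a*ε))) * (s-u)^2 := by
        rw [intervalIntegral.integral_const_mul, Ppoly s]
      rw [h1]
      refine intervalIntegral.integral_mono_on hε.le (intC s)
        ((by fun_prop : Continuous fun u : ℝ =>
          (a^2 * max 1 (Real.exp (2*a*ε))) * (s-u)^2).intervalIntegrable _ _)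
        (fun u hu => ?_)
      have := (pw s hs u hu).2
      linarith [this]
    calc (∫ s in (0:ℝ)..ε, ∫ u in (0:ℝ)..ε, (Real.exp (a*s) - Real.exp (a*u))^2)
        ≤ ∫ s in (0:ℝ)..ε, (a^2 * max 1 (Real.exp (2*a*ε))) * (ε*s^2 - ε^2*s + ε^3/3) :=
          intervalIntegral.integral_mono_on hε.le intB
            ((by fun_prop : Continuous fun s : ℝ =>
              (a^2 * max 1 (Real.exp (2*a*ε))) * (ε*s^2 - ε^2*s + ε^3/3)).intervalIntegrable _ _)
            ihi
      _ = a^2 * max 1 (Real.exp (2*a*ε)) * (ε^4/6) := by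
          rw [intervalIntegral.integral_const_mul, Ppoly2]
  have hpos : (0:ℝ) < 1/(2*ε^2) := by positivity
  refine ⟨part1, ?_, ?_⟩
  · calc (a^2 * ε^2 / 12) * min 1 (Real.exp (2*a*ε))
        = (1/(2*ε^2)) * (a^2 * min 1 (Real.exp (2*a*ε)) * (ε^4/6)) := by
          field_simp; ring
      _ ≤ (1/(2*ε^2)) * ∫ s in (0:ℝ)..ε, ∫ u in (0:ℝ)..ε,
            (Real.exp (a*s) - Real.exp (a*u))^2 :=
          mul_le_mul_of_nonneg_left Dlo hpos.le
      _ = _ := part1.symm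
  · calc (1/ε) * (∫ s in (0:ℝ)..ε, (Real.exp (a*s) - (1/ε) * I1)^2)
        = (1/(2*ε^2)) * ∫ s in (0:ℝ)..ε, ∫ u in (0:ℝ)..ε,
            (Real.exp (a*s) - Real.exp (a*u))^2 := part1
      _ ≤ (1/(2*ε^2)) * (a^2 * max 1 (Real.exp (2*a*ε)) * (ε^4/6)) :=
          mul_le_mul_of_nonneg_left Dhi hpos.le
      _ = (a^2 * ε^2 / 12) * max 1 (Real.exp (2*a*ε)) := by
          field_simp; ring
end

section
/- For a ∈ ℝ, ε > 0 and n ≥ 1, define V_n(a,ε) := ε · v(a,ε) · Σ_{k=1}^n e^{2a(n−k)ε}, where v(a,ε) := (1/ε)∫_0^ε (e^{as} − (1/ε)∫_0^ε e^{au} du)^2 ds. If a < 0, then for every n ≥ 1, V_n(a,ε) ≤ (|a|/24) · e^{2|a|ε} · ε^2. -/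
/-!
Replacing the mean of `s ↦ e^{as}` on `[0, ε]` by its midpoint value `e^{aε/2}` can only
increase the `L²` deviation, and since `exp` is `1`-Lipschitz on `(-∞, 0]` that deviation is at
most `a² ∫₀^ε (s - ε/2)² ds = a² ε³ / 12`, so `v(a, ε) ≤ a² ε² / 12`. The sum is a geometric sum
with ratio `e^{2aε} < 1`, bounded by `1 / (1 - e^{-2|a|ε}) ≤ e^{2|a|ε} / (2|a|ε)` because
`x ≤ e^x - 1`.
-/

open Real Finset intervalIntegral
open MeasureTheory (volume)

theorem Real.exp_sub_exp_le_sub_of_nonpos {x y : ℝ} (hy : y ≤ 0) (hxy : x ≤ y) :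
    exp y - exp x ≤ y - x := by
  have h : exp y * (1 - exp (x - y)) ≤ exp y * (y - x) :=
    mul_le_mul_of_nonneg_left (by linarith [add_one_le_exp (x - y)]) (exp_pos y).le
  have hexp : exp y * (1 - exp (x - y)) = exp y - exp x := by
    rw [mul_sub, ← exp_add, add_sub_cancel, mul_one]
  nlinarith [exp_le_one_iff.mpr hy]

theorem Real.abs_exp_sub_exp_le_of_nonpos {x y : ℝ} (hx : x ≤ 0) (hy : y ≤ 0) :
    |exp x - exp y| ≤ |x - y| := by
  rcases le_total x y with h | h
  · rw [abs_sub_comm, abs_sub_comm x, abs_of_nonneg (sub_nonneg.mpr (exp_le_exp.mpr h)),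
      abs_of_nonneg (sub_nonneg.mpr h)]
    exact exp_sub_exp_le_sub_of_nonpos hy h
  · rw [abs_of_nonneg (sub_nonneg.mpr (exp_le_exp.mpr h)), abs_of_nonneg (sub_nonneg.mpr h)]
    exact exp_sub_exp_le_sub_of_nonpos hx h

theorem Real.inv_one_sub_exp_neg_le {x : ℝ} (hx : 0 < x) : (1 - exp (-x))⁻¹ ≤ exp x / x := by
  have hx1 : x ≤ exp x - 1 := by linarith [add_one_le_exp x]
  have hrw : (1 - exp (-x))⁻¹ = exp x / (exp x - 1) := by
    rw [exp_neg]; field_simp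
  rw [hrw]
  exact div_le_div_of_nonneg_left (exp_pos x).le hx hx1

theorem sum_Icc_pow_sub_le {r : ℝ} (hr₀ : 0 ≤ r) (hr₁ : r < 1) (n : ℕ) :
    ∑ k ∈ Icc 1 n, r ^ (n - k) ≤ (1 - r)⁻¹ := by
  have hreflect : ∑ k ∈ Icc 1 n, r ^ (n - k) = ∑ j ∈ Ico 0 n, r ^ j := by
    rw [← Ico_add_one_right_eq_Icc, sum_Ico_reflect (fun j => r ^ j) 1 le_rfl]
    simp
  simpa [hreflect] using geom_sum_Ico_le_of_lt_one (m := 0) (n := n) hr₀ hr₁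

theorem sum_Icc_exp_mul_sub_le {c : ℝ} (hc : c < 0) (n : ℕ) :
    ∑ k ∈ Icc 1 n, exp (c * ((n : ℝ) - k)) ≤ exp (-c) / -c := by
  have hpow : ∀ k ∈ Icc 1 n, exp (c * ((n : ℝ) - k)) = exp c ^ (n - k) := by
    intro k hk
    rw [← exp_nat_mul, Nat.cast_sub (mem_Icc.mp hk).2, mul_comm]
  rw [sum_congr rfl hpow]
  calc ∑ k ∈ Icc 1 n, exp c ^ (n - k) ≤ (1 - exp c)⁻¹ :=
        sum_Icc_pow_sub_le (exp_pos c).le (exp_lt_one_iff.mpr hc) n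
    _ ≤ exp (-c) / -c := by simpa using inv_one_sub_exp_neg_le (neg_pos.mpr hc)

section Variance

variable {f : ℝ → ℝ} {a b : ℝ}

theorem intervalIntegral.integral_sub_const_sq (hf : IntervalIntegrable f volume a b)
    (hf2 : IntervalIntegrable (fun x => f x ^ 2) volume a b) (c : ℝ) :
    ∫ x in a..b, (f x - c) ^ 2 =
      (∫ x in a..b, f x ^ 2) - 2 * c * (∫ x in a..b, f x) + c ^ 2 * (b - a) := by
  have hexpand : ∀ x, (f x - c) ^ 2 = (f x ^ 2 - (2 * c) * f x) + c ^ 2 := fun x => by ring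
  simp_rw [hexpand]
  rw [integral_add (hf2.sub (hf.const_mul _)) intervalIntegrable_const,
    integral_sub hf2 (hf.const_mul _), integral_const_mul, integral_const, smul_eq_mul]
  ring

theorem intervalIntegral.integral_sub_average_sq_le (hab : a ≤ b)
    (hf : IntervalIntegrable f volume a b)
    (hf2 : IntervalIntegrable (fun x => f x ^ 2) volume a b) (c : ℝ) :
    ∫ x in a..b, (f x - (1 / (b - a)) * ∫ y in a..b, f y) ^ 2 ≤
      ∫ x in a..b, (f x - c) ^ 2 := by
  rcases hab.eq_or_lt with rfl | hlt
  · simp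
  set m := (1 / (b - a)) * ∫ y in a..b, f y
  have hI : ∫ y in a..b, f y = (b - a) * m := by
    simp only [m]; field_simp
  rw [integral_sub_const_sq hf hf2, integral_sub_const_sq hf hf2, hI]
  nlinarith [mul_nonneg (sub_pos.mpr hlt).le (sq_nonneg (m - c))]

end Variance

theorem intervalIntegral.integral_sub_midpoint_sq (a b : ℝ) :
    ∫ x in a..b, (x - (a + b) / 2) ^ 2 = (b - a) ^ 3 / 12 := by
  rw [integral_comp_sub_right (fun x => x ^ 2), integral_pow]
  ring

theorem mean_sq_deviation_exp_mul_le {a ε : ℝ} (ha : a ≤ 0) (hε : 0 < ε) :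
    (1 / ε) * ∫ s in (0:ℝ)..ε, (exp (a * s) - (1 / ε) * ∫ u in (0:ℝ)..ε, exp (a * u)) ^ 2
      ≤ a ^ 2 * ε ^ 2 / 12 := by
  have hcont : Continuous fun s => exp (a * s) := by fun_prop
  have hmean := integral_sub_average_sq_le hε.le (hcont.intervalIntegrable 0 ε)
    ((hcont.pow 2).intervalIntegrable 0 ε) (exp (a * (ε / 2)))
  rw [sub_zero] at hmean
  have hlip : ∫ s in (0:ℝ)..ε, (exp (a * s) - exp (a * (ε / 2))) ^ 2
      ≤ ∫ s in (0:ℝ)..ε, a ^ 2 * (s - (0 + ε) / 2) ^ 2 := by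
    refine integral_mono_on hε.le (((hcont.sub continuous_const).pow 2).intervalIntegrable _ _)
      ((by fun_prop : Continuous _).intervalIntegrable _ _) fun s hs => ?_
    have h := abs_exp_sub_exp_le_of_nonpos (mul_nonpos_of_nonpos_of_nonneg ha hs.1)
      (mul_nonpos_of_nonpos_of_nonneg ha (half_pos hε).le)
    rw [← mul_sub, abs_mul] at h
    calc (exp (a * s) - exp (a * (ε / 2))) ^ 2 ≤ (|a| * |s - ε / 2|) ^ 2 :=
          sq_le_sq' (by linarith [neg_abs_le (exp (a * s) - exp (a * (ε / 2)))])
            (le_of_abs_le h)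
      _ = a ^ 2 * (s - (0 + ε) / 2) ^ 2 := by rw [mul_pow, sq_abs, sq_abs, zero_add]
  rw [integral_const_mul, integral_sub_midpoint_sq] at hlip
  calc _ ≤ (1 / ε) * (a ^ 2 * ((ε - 0) ^ 3 / 12)) :=
        mul_le_mul_of_nonneg_left (hmean.trans hlip) (by positivity)
    _ = a ^ 2 * ε ^ 2 / 12 := by field_simp; ring

theorem stmt_3_general (a ε : ℝ) (ha : a < 0) (hε : 0 < ε) (n : ℕ) :
    ε * ((1/ε) * ∫ s in (0:ℝ)..ε,
          (Real.exp (a*s) - (1/ε) * ∫ u in (0:ℝ)..ε, Real.exp (a*u))^2)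
      * ∑ k ∈ Finset.Icc 1 n, Real.exp (2*a*((n:ℝ) - (k:ℝ))*ε)
    ≤ (|a|/24) * Real.exp (2 * |a| * ε) * ε^2 := by
  have hc : 2 * a * ε < 0 := by nlinarith
  have hsum : ∑ k ∈ Icc 1 n, exp (2 * a * ((n : ℝ) - k) * ε) ≤
      exp (2 * |a| * ε) / (2 * |a| * ε) := by
    have h := sum_Icc_exp_mul_sub_le hc n
    rw [abs_of_neg ha, show 2 * -a * ε = -(2 * a * ε) by ring]
    convert h using 3 with k
    ring
  have hvar := mean_sq_deviation_exp_mul_le ha.le hε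
  calc _ ≤ ε * (a ^ 2 * ε ^ 2 / 12) * (exp (2 * |a| * ε) / (2 * |a| * ε)) :=
        mul_le_mul (mul_le_mul_of_nonneg_left hvar hε.le) hsum
          (sum_nonneg fun _ _ => (exp_pos _).le) (by positivity)
    _ = (|a| / 24) * exp (2 * |a| * ε) * ε ^ 2 := by
        have : |a| ≠ 0 := abs_ne_zero.mpr ha.ne
        rw [← sq_abs a]; field_simp; ring

/-- For the linear model `dX = aX dt + dB` with `a < 0`, the mean squared Wong–Zakai error
`V_n(a,ε) = ε·v(a,ε)·Σ_{k=1}^n e^{2a(n−k)ε}` is bounded by `(|a|/24)·e^{2|a|ε}·ε²`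
uniformly in `n ≥ 1`, where `v(a,ε) := (1/ε)∫_0^ε (e^{as} − (1/ε)∫_0^ε e^{au} du)² ds`. -/
theorem stmt_3 (a ε : ℝ) (ha : a < 0) (hε : 0 < ε) (n : ℕ) (hn : 1 ≤ n) :
    ε * ((1/ε) * ∫ s in (0:ℝ)..ε,
          (Real.exp (a*s) - (1/ε) * ∫ u in (0:ℝ)..ε, Real.exp (a*u))^2)
      * ∑ k ∈ Finset.Icc 1 n, Real.exp (2*a*((n:ℝ) - (k:ℝ))*ε)
    ≤ (|a|/24) * Real.exp (2 * |a| * ε) * ε^2 :=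
  stmt_3_general a ε ha hε n
end

section
/- For a ∈ ℝ, ε > 0 and n ≥ 1, define V_n(a,ε) := ε · v(a,ε) · Σ_{k=1}^n e^{2a(n−k)ε}, where v(a,ε) := (1/ε)∫_0^ε (e^{as} − (1/ε)∫_0^ε e^{au} du)^2 ds. If a > 0, then for every n ≥ 1, ε^2 · (a/24) · e^{−2aε} · (e^{2anε} − 1) ≤ V_n(a,ε) ≤ ε^2 · (a/24) · e^{2aε} · (e^{2anε} − 1). -/
/-!
With `x = aε`, the integral equals `g(x) / (12 a² ε)` for `g(x) = 6x(e^{2x} - 1) - 12(eˣ - 1)²`,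
which is `12x²` times the variance of `e^{xU}` for `U` uniform on `[0, 1]`. Since
`g(0) = g'(0) = 0` and `g''(x) = 24eˣ((x - 1)eˣ + 1)` with `x²/2 ≤ (x - 1)eˣ + 1 ≤ x²eˣ/2`,
comparing second derivatives gives `x⁴ ≤ g(x) ≤ x⁴e^{2x}`: one step contributes between
`a²ε³/12` and `a²ε³e^{2aε}/12`. The sum over steps is geometric,
`(e^{2aε} - 1) Σ = e^{2anε} - 1`, and `1 - e^{-2aε} ≤ 2aε ≤ e^{2aε} - 1` turns the one-step
bounds into the stated ones.
-/

open Real MeasureTheory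

theorem le_of_hasDerivAt_le {f g f' g' : ℝ → ℝ} {x₀ : ℝ} (hf : ∀ x, HasDerivAt f (f' x) x)
    (hg : ∀ x, HasDerivAt g (g' x) x) (h₀ : f x₀ ≤ g x₀) (h' : ∀ x, x₀ ≤ x → f' x ≤ g' x)
    {x : ℝ} (hx : x₀ ≤ x) : f x ≤ g x := by
  have hmono : MonotoneOn (g - f) (Set.Ici x₀) :=
    monotoneOn_of_hasDerivWithinAt_nonneg (convex_Ici x₀)
      (fun y _ => ((hg y).sub (hf y)).continuousAt.continuousWithinAt)
      (fun y _ => ((hg y).sub (hf y)).hasDerivWithinAt)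
      (fun y hy => sub_nonneg.2 (h' y (interior_subset hy)))
  have := hmono Set.self_mem_Ici hx hx
  simp only [Pi.sub_apply] at this
  linarith

theorem le_of_hasDerivAt_le_of_hasDerivAt_le {f g f' g' f'' g'' : ℝ → ℝ} {x₀ : ℝ}
    (hf : ∀ x, HasDerivAt f (f' x) x) (hg : ∀ x, HasDerivAt g (g' x) x)
    (hf' : ∀ x, HasDerivAt f' (f'' x) x) (hg' : ∀ x, HasDerivAt g' (g'' x) x)
    (h₀ : f x₀ ≤ g x₀) (h₀' : f' x₀ ≤ g' x₀) (h'' : ∀ x, x₀ ≤ x → f'' x ≤ g'' x)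
    {x : ℝ} (hx : x₀ ≤ x) : f x ≤ g x :=
  le_of_hasDerivAt_le hf hg h₀ (fun _ hy => le_of_hasDerivAt_le hf' hg' h₀' h'' hy) hx

theorem hasDerivAt_sub_one_mul_exp_add_one (x : ℝ) :
    HasDerivAt (fun y => (y - 1) * exp y + 1) (x * exp x) x := by
  refine ((((hasDerivAt_id x).sub_const 1).mul (hasDerivAt_exp x)).add_const 1).congr_deriv ?_
  simp only [id_eq]; ring

theorem sq_div_two_le_sub_one_mul_exp_add_one {x : ℝ} (hx : 0 ≤ x) :
    x ^ 2 / 2 ≤ (x - 1) * exp x + 1 := by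
  have hsq (y : ℝ) : HasDerivAt (fun y => y ^ 2 / 2) y y := by
    refine ((hasDerivAt_pow 2 y).div_const 2).congr_deriv ?_
    norm_num
  refine le_of_hasDerivAt_le hsq hasDerivAt_sub_one_mul_exp_add_one (by simp) (fun y hy => ?_) hx
  simpa using mul_le_mul_of_nonneg_left (one_le_exp hy) hy

theorem sub_one_mul_exp_add_one_le {x : ℝ} (hx : 0 ≤ x) :
    (x - 1) * exp x + 1 ≤ x ^ 2 * exp x / 2 := by
  have hsq (y : ℝ) : HasDerivAt (fun y => y ^ 2 * exp y / 2) ((y + y ^ 2 / 2) * exp y) y := by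
    refine (((hasDerivAt_pow 2 y).mul (hasDerivAt_exp y)).div_const 2).congr_deriv ?_
    norm_num; ring
  refine le_of_hasDerivAt_le hasDerivAt_sub_one_mul_exp_add_one hsq (by simp) (fun y hy => ?_) hx
  nlinarith [exp_pos y]

noncomputable def scaledExpVariance (x : ℝ) : ℝ := 6 * x * (exp x ^ 2 - 1) - 12 * (exp x - 1) ^ 2

theorem hasDerivAt_scaledExpVariance (x : ℝ) :
    HasDerivAt scaledExpVariance (12 * x * exp x ^ 2 - 18 * exp x ^ 2 + 24 * exp x - 6) x := by
  refine ((((hasDerivAt_id x).const_mul 6).mul (((hasDerivAt_exp x).pow 2).sub_const 1)).sub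
    (((hasDerivAt_exp x).sub_const 1).pow 2 |>.const_mul 12)).congr_deriv ?_
  simp only [id_eq, Pi.pow_apply]; ring

theorem hasDerivAt_deriv_scaledExpVariance (x : ℝ) :
    HasDerivAt (fun y => 12 * y * exp y ^ 2 - 18 * exp y ^ 2 + 24 * exp y - 6)
      (24 * exp x * ((x - 1) * exp x + 1)) x := by
  refine (((((hasDerivAt_id x).const_mul 12).mul ((hasDerivAt_exp x).pow 2)).sub
    (((hasDerivAt_exp x).pow 2).const_mul 18)).add
    ((hasDerivAt_exp x).const_mul 24) |>.sub_const 6).congr_deriv ?_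
  simp only [id_eq, Pi.pow_apply]; ring

theorem pow_four_le_scaledExpVariance {x : ℝ} (hx : 0 ≤ x) : x ^ 4 ≤ scaledExpVariance x := by
  have hf (y : ℝ) : HasDerivAt (fun y => y ^ 4) (4 * y ^ 3) y := by
    simpa using hasDerivAt_pow 4 y
  have hf' (y : ℝ) : HasDerivAt (fun y => 4 * y ^ 3) (12 * y ^ 2) y := by
    refine ((hasDerivAt_pow 3 y).const_mul 4).congr_deriv ?_
    norm_num; ring
  refine le_of_hasDerivAt_le_of_hasDerivAt_le hf hasDerivAt_scaledExpVariance hf'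
    hasDerivAt_deriv_scaledExpVariance (by simp [scaledExpVariance]) (by norm_num)
    (fun y hy => ?_) hx
  nlinarith [sq_div_two_le_sub_one_mul_exp_add_one hy, one_le_exp hy, sq_nonneg y]

theorem scaledExpVariance_le {x : ℝ} (hx : 0 ≤ x) :
    scaledExpVariance x ≤ x ^ 4 * exp x ^ 2 := by
  have hg (y : ℝ) :
      HasDerivAt (fun y => y ^ 4 * exp y ^ 2) ((4 * y ^ 3 + 2 * y ^ 4) * exp y ^ 2) y := by
    refine ((hasDerivAt_pow 4 y).mul ((hasDerivAt_exp y).pow 2)).congr_deriv ?_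
    norm_num; ring
  have hg' (y : ℝ) : HasDerivAt (fun y => (4 * y ^ 3 + 2 * y ^ 4) * exp y ^ 2)
      ((12 * y ^ 2 + 16 * y ^ 3 + 4 * y ^ 4) * exp y ^ 2) y := by
    refine ((((hasDerivAt_pow 3 y).const_mul 4).add ((hasDerivAt_pow 4 y).const_mul 2)).mul
      ((hasDerivAt_exp y).pow 2)).congr_deriv ?_
    norm_num; ring
  refine le_of_hasDerivAt_le_of_hasDerivAt_le hasDerivAt_scaledExpVariance hg
    hasDerivAt_deriv_scaledExpVariance hg' (by simp [scaledExpVariance]) (by norm_num)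
    (fun y hy => ?_) hx
  have hh := sub_one_mul_exp_add_one_le hy
  have he := exp_pos y
  have : 0 ≤ (16 * y ^ 3 + 4 * y ^ 4) * exp y ^ 2 := by positivity
  nlinarith

theorem integral_sq_sub_average {f : ℝ → ℝ} {a b : ℝ} 
    (hf : IntervalIntegrable f volume a b) (hf2 : IntervalIntegrable (fun x => f x ^ 2) volume a b) :
    ∫ x in a..b, (f x - (1 / (b - a)) * ∫ y in a..b, f y) ^ 2
      = (∫ x in a..b, f x ^ 2) - (∫ x in a..b, f x) ^ 2 / (b - a) := by
  rcases eq_or_ne b a with rfl | hab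
  · simp
  set c := (1 / (b - a)) * ∫ y in a..b, f y with hc
  have hexpand : (fun x => (f x - c) ^ 2) = fun x => f x ^ 2 - 2 * c * f x + c ^ 2 := by
    ext x; ring
  rw [hexpand, intervalIntegral.integral_add (hf2.sub (hf.const_mul _)) intervalIntegrable_const,
    intervalIntegral.integral_sub hf2 (hf.const_mul _), intervalIntegral.integral_const_mul,
    intervalIntegral.integral_const, smul_eq_mul]
  have : b - a ≠ 0 := sub_ne_zero.2 hab
  rw [hc]
  field_simp
  ring

theorem integral_exp_mul {c : ℝ} (hc : c ≠ 0) (a b : ℝ) :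
    ∫ x in a..b, exp (c * x) = (exp (c * b) - exp (c * a)) / c := by
  rw [intervalIntegral.integral_comp_mul_left exp hc, integral_exp, smul_eq_mul, inv_mul_eq_div]

theorem integral_sq_exp_sub_average {a ε : ℝ} (ha : a ≠ 0) (hε : ε ≠ 0) :
    ∫ s in (0:ℝ)..ε, (exp (a * s) - (1 / ε) * ∫ u in (0:ℝ)..ε, exp (a * u)) ^ 2
      = scaledExpVariance (a * ε) / (12 * a ^ 2 * ε) := by
  have hcont : Continuous fun s => exp (a * s) := by fun_prop
  have h := integral_sq_sub_average (hcont.intervalIntegrable 0 ε)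
    ((hcont.pow 2).intervalIntegrable 0 ε)
  rw [sub_zero] at h
  have hsq : ∫ s in (0:ℝ)..ε, exp (a * s) ^ 2 = ∫ s in (0:ℝ)..ε, exp (2 * a * s) := by
    congr with s
    rw [← exp_nat_mul]; ring_nf
  have hexp : exp (2 * a * ε) = exp (a * ε) ^ 2 := by rw [← exp_nat_mul]; ring_nf
  rw [h, hsq, integral_exp_mul ha, integral_exp_mul (mul_ne_zero two_ne_zero ha), hexp,
    scaledExpVariance]
  simp only [mul_zero, exp_zero]
  field_simp
  ring

theorem integral_sq_exp_sub_average_mem_Icc {a ε : ℝ} (ha : 0 < a) (hε : 0 < ε) :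
    ∫ s in (0:ℝ)..ε, (exp (a * s) - (1 / ε) * ∫ u in (0:ℝ)..ε, exp (a * u)) ^ 2
      ∈ Set.Icc (a ^ 2 * ε ^ 3 / 12) (a ^ 2 * ε ^ 3 * exp (2 * a * ε) / 12) := by
  have hx : 0 ≤ a * ε := by positivity
  have hden : 0 < 12 * a ^ 2 * ε := by positivity
  rw [integral_sq_exp_sub_average ha.ne' hε.ne']
  constructor
  · calc a ^ 2 * ε ^ 3 / 12 = (a * ε) ^ 4 / (12 * a ^ 2 * ε) := by field_simp
      _ ≤ _ := by gcongr; exact pow_four_le_scaledExpVariance hx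
  · calc _ ≤ (a * ε) ^ 4 * exp (a * ε) ^ 2 / (12 * a ^ 2 * ε) := by
          gcongr; exact scaledExpVariance_le hx
      _ = a ^ 2 * ε ^ 3 * exp (2 * a * ε) / 12 := by
          rw [← exp_nat_mul]; field_simp; ring_nf

theorem sum_Icc_exp_mul_sub_eq_sum_range (c : ℝ) (n : ℕ) :
    ∑ k ∈ Finset.Icc 1 n, exp (c * ((n : ℝ) - k)) = ∑ j ∈ Finset.range n, exp c ^ j := by
  rw [← Finset.Ico_add_one_right_eq_Icc, Finset.sum_Ico_eq_sum_range, Nat.add_sub_cancel,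
    ← Finset.sum_range_reflect]
  refine Finset.sum_congr rfl fun j hj => ?_
  rw [Finset.mem_range] at hj
  rw [← exp_nat_mul]
  push_cast [Nat.cast_sub (by omega : j ≤ n - 1), Nat.cast_sub (by omega : 1 ≤ n)]
  ring_nf

theorem exp_sub_one_mul_sum_Icc_exp_mul_sub (c : ℝ) (n : ℕ) :
    (exp c - 1) * ∑ k ∈ Finset.Icc 1 n, exp (c * ((n : ℝ) - k)) = exp (c * n) - 1 := by
  rw [sum_Icc_exp_mul_sub_eq_sum_range, mul_geom_sum, ← exp_nat_mul, mul_comm]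

theorem stmt_4_general (a ε : ℝ) (ha : 0 < a) (hε : 0 < ε) (n : ℕ) :
    ε^2 * (a/24) * Real.exp (-(2*a*ε)) * (Real.exp (2*a*(n:ℝ)*ε) - 1)
      ≤ ε * ((1/ε) * ∫ s in (0:ℝ)..ε,
            (Real.exp (a*s) - (1/ε) * ∫ u in (0:ℝ)..ε, Real.exp (a*u))^2)
          * ∑ k ∈ Finset.Icc 1 n, Real.exp (2*a*((n:ℝ) - (k:ℝ))*ε)
    ∧ ε * ((1/ε) * ∫ s in (0:ℝ)..ε,
            (Real.exp (a*s) - (1/ε) * ∫ u in (0:ℝ)..ε, Real.exp (a*u))^2)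
          * ∑ k ∈ Finset.Icc 1 n, Real.exp (2*a*((n:ℝ) - (k:ℝ))*ε)
      ≤ ε^2 * (a/24) * Real.exp (2*a*ε) * (Real.exp (2*a*(n:ℝ)*ε) - 1) := by
  set I := ∫ s in (0:ℝ)..ε, (exp (a * s) - (1 / ε) * ∫ u in (0:ℝ)..ε, exp (a * u)) ^ 2
  set S := ∑ k ∈ Finset.Icc 1 n, exp (2 * a * ((n : ℝ) - k) * ε)
  obtain ⟨hI_ge, hI_le⟩ := integral_sq_exp_sub_average_mem_Icc ha hε
  have hS : 0 ≤ S := Finset.sum_nonneg fun _ _ => (exp_pos _).le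
  have hgeom : exp (2 * a * n * ε) - 1 = (exp (2 * a * ε) - 1) * S := by
    rw [mul_right_comm, ← exp_sub_one_mul_sum_Icc_exp_mul_sub]
    congr 1
    exact Finset.sum_congr rfl fun k _ => by ring_nf
  have hV : ε * ((1 / ε) * I) * S = I * S := by field_simp
  have h_neg : exp (-(2 * a * ε)) * (exp (2 * a * ε) - 1) ≤ 2 * a * ε := by
    rw [mul_sub, ← exp_add, neg_add_cancel, exp_zero, mul_one]
    linarith [add_one_le_exp (-(2 * a * ε))]
  have h_pos : 2 * a * ε ≤ exp (2 * a * ε) - 1 := by linarith [add_one_le_exp (2 * a * ε)]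
  rw [hV, hgeom]
  constructor
  · calc ε ^ 2 * (a / 24) * exp (-(2 * a * ε)) * ((exp (2 * a * ε) - 1) * S)
        = ε ^ 2 * (a / 24) * (exp (-(2 * a * ε)) * (exp (2 * a * ε) - 1)) * S := by ring
      _ ≤ ε ^ 2 * (a / 24) * (2 * a * ε) * S := by gcongr
      _ = a ^ 2 * ε ^ 3 / 12 * S := by ring
      _ ≤ I * S := by gcongr
  · calc I * S ≤ a ^ 2 * ε ^ 3 * exp (2 * a * ε) / 12 * S := by gcongr
      _ = ε ^ 2 * (a / 24) * exp (2 * a * ε) * (2 * a * ε) * S := by ring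
      _ ≤ ε ^ 2 * (a / 24) * exp (2 * a * ε) * (exp (2 * a * ε) - 1) * S := by gcongr
      _ = ε ^ 2 * (a / 24) * exp (2 * a * ε) * ((exp (2 * a * ε) - 1) * S) := by ring

/-- For the linear model `dX = aX dt + dB` with `a > 0`, the mean squared Wong–Zakai error
`V_n(a,ε) = ε·v(a,ε)·Σ_{k=1}^n e^{2a(n−k)ε}` satisfies
`ε²·(a/24)·e^{−2aε}·(e^{2anε} − 1) ≤ V_n(a,ε) ≤ ε²·(a/24)·e^{2aε}·(e^{2anε} − 1)`
for every `n ≥ 1`, where `v(a,ε) := (1/ε)∫_0^ε (e^{as} − (1/ε)∫_0^ε e^{au} du)² ds`. -/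
theorem stmt_4 (a ε : ℝ) (ha : 0 < a) (hε : 0 < ε) (n : ℕ) (hn : 1 ≤ n) :
    ε^2 * (a/24) * Real.exp (-(2*a*ε)) * (Real.exp (2*a*(n:ℝ)*ε) - 1)
      ≤ ε * ((1/ε) * ∫ s in (0:ℝ)..ε,
            (Real.exp (a*s) - (1/ε) * ∫ u in (0:ℝ)..ε, Real.exp (a*u))^2)
          * ∑ k ∈ Finset.Icc 1 n, Real.exp (2*a*((n:ℝ) - (k:ℝ))*ε)
    ∧ ε * ((1/ε) * ∫ s in (0:ℝ)..ε,
            (Real.exp (a*s) - (1/ε) * ∫ u in (0:ℝ)..ε, Real.exp (a*u))^2)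
          * ∑ k ∈ Finset.Icc 1 n, Real.exp (2*a*((n:ℝ) - (k:ℝ))*ε)
      ≤ ε^2 * (a/24) * Real.exp (2*a*ε) * (Real.exp (2*a*(n:ℝ)*ε) - 1) :=
  stmt_4_general a ε ha hε n
end

section
/- Let r ≥ 1 and let b : ℝ^r → ℝ^r be continuously differentiable with M := sup_x ‖Db(x)‖ < ∞ (operator norm of the Jacobian) and satisfying the log-norm condition: there is λ_b > 0 such that ⟨v, Db(x) v⟩ ≤ −λ_b ‖v‖^2 for all x, v ∈ ℝ^r. Let Σ be an r × r real matrix and let W, W̄ : [0,∞) → ℝ^r be continuous paths with W_0 = W̄_0 = 0. Suppose X, X̄ : [0,∞) × ℝ^r → ℝ^r are continuous in time and satisfy, for all t ≥ 0 and x ∈ ℝ^r, X_t(x) = x + ∫_0^t b(X_s(x)) ds + Σ W_t and X̄_t(x) = x + ∫_0^t b(X̄_s(x)) ds + Σ W̄_t. Then there exist constants c > 0 and λ > 0, depending only on λ_b, M and ‖Σ‖, such that for every t ≥ 0, sup_{x ∈ ℝ^r} ‖X_t(x) − X̄_t(x)‖ ≤ c ( ‖W_t − W̄_t‖ + ( ∫_0^t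 e^{−2λ(t−s)} ‖W_s − W̄_s‖^2 ds )^{1/2} ). -/
/-!
With `Δ = W - W̄`, the process `Z = X - X̄ - ΣΔ` satisfies `Z' = b(X) - b(X̄)` and `Z 0 = 0`.
The log-norm condition makes `b` one-sided Lipschitz, `⟪u - v, b u - b v⟫ ≤ -λ_b ‖u - v‖²`;
together with the Lipschitz constant `M` and Young's inequality this yields the dissipative
differential inequality `(‖Z‖²)' ≤ -(λ_b/2) ‖Z‖² + C ‖ΣΔ‖²`. Integrating it against the factor
`e^{λ_b t/2}` bounds `‖Z_t‖²` by `C ∫₀ᵗ e^{-λ_b (t-s)/2} ‖ΣΔ_s‖² ds`, and `X - X̄ = Z + ΣΔ`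
gives the estimate with `λ = λ_b/4`.
-/

open scoped RealInnerProductSpace NNReal
open Real Set

theorem le_exp_mul_add_integral_of_hasDerivAt_le {φ φ' f : ℝ → ℝ} {μ t : ℝ}
    (hφ : ContinuousOn φ (Ici 0)) (hφ' : ∀ s > 0, HasDerivAt φ (φ' s) s)
    (hle : ∀ s > 0, φ' s ≤ -μ * φ s + f s) (hf : Continuous f) (ht : 0 ≤ t) :
    φ t ≤ exp (-(μ * t)) * φ 0 + ∫ s in (0:ℝ)..t, exp (-(μ * (t - s))) * f s := by
  set P : ℝ → ℝ := fun s => ∫ u in (0:ℝ)..s, exp (μ * u) * f u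
  have hP : ∀ s, HasDerivAt P (exp (μ * s) * f s) s := fun s =>
    ((by fun_prop : Continuous fun u => exp (μ * u) * f u).integral_hasStrictDerivAt 0 s).hasDerivAt
  have hexp : ∀ s, HasDerivAt (fun u => exp (μ * u)) (exp (μ * s) * μ) s := fun s => by
    simpa using ((hasDerivAt_id s).const_mul μ).exp
  -- `e^{μ s} φ s - P s` is a Lyapunov function: its derivative is `e^{μ s} (φ' + μ φ - f) ≤ 0`.
  have hanti : AntitoneOn (fun s => exp (μ * s) * φ s - P s) (Ici 0) := by
    refine antitoneOn_of_hasDerivWithinAt_nonpos (convex_Ici 0)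
      (((by fun_prop : Continuous fun u => exp (μ * u)).continuousOn.mul hφ).sub
        (continuous_iff_continuousAt.2 fun s => (hP s).continuousAt).continuousOn)
      (f' := fun s => exp (μ * s) * (φ' s + μ * φ s - f s)) ?_ ?_
    · intro s hs
      rw [interior_Ici] at hs
      exact (((hexp s).mul (hφ' s hs)).sub (hP s)).hasDerivWithinAt.congr_deriv (by ring)
    · intro s hs
      rw [interior_Ici] at hs
      have := hle s hs
      exact mul_nonpos_of_nonneg_of_nonpos (exp_pos _).le (by linarith)
  have hFt : exp (μ * t) * φ t ≤ φ 0 + P t := by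
    have := hanti self_mem_Ici ht ht
    simp only [mul_zero, exp_zero, one_mul, P, intervalIntegral.integral_same, sub_zero] at this
    linarith
  calc φ t = exp (-(μ * t)) * (exp (μ * t) * φ t) := by
        rw [← mul_assoc, ← exp_add, neg_add_cancel, exp_zero, one_mul]
    _ ≤ exp (-(μ * t)) * (φ 0 + P t) := mul_le_mul_of_nonneg_left hFt (exp_pos _).le
    _ = _ := by
      rw [mul_add, ← intervalIntegral.integral_const_mul]
      congr 1
      refine intervalIntegral.integral_congr fun s _ => ?_
      simp only [← mul_assoc, ← exp_add]
      ring_nf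

section InnerProductSpace

variable {E : Type*} [NormedAddCommGroup E] [InnerProductSpace ℝ E] {b : E → E} {lamb : ℝ}

theorem inner_sub_map_sub_le_of_inner_fderiv_le (hb : Differentiable ℝ b)
    (hlog : ∀ x v, ⟪v, fderiv ℝ b x v⟫ ≤ -lamb * ‖v‖ ^ 2) (u v : E) :
    ⟪u - v, b u - b v⟫ ≤ -lamb * ‖u - v‖ ^ 2 := by
  set w := u - v
  -- On the segment from `v` to `u` the log-norm bound makes this function antitone.
  have hderiv : ∀ θ : ℝ, HasDerivAt (fun θ : ℝ => ⟪w, b (v + θ • w)⟫ + lamb * ‖w‖ ^ 2 * θ)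
      (⟪w, fderiv ℝ b (v + θ • w) w⟫ + lamb * ‖w‖ ^ 2) θ := by
    intro θ
    have hline : HasDerivAt (fun θ : ℝ => v + θ • w) w θ := by
      simpa using ((hasDerivAt_id θ).smul_const w).const_add v
    have hinner :
        HasDerivAt (fun θ : ℝ => ⟪w, b (v + θ • w)⟫) ⟪w, fderiv ℝ b (v + θ • w) w⟫ θ := by
      simpa using (hasDerivAt_const θ w).inner ℝ
        ((hb (v + θ • w)).hasFDerivAt.comp_hasDerivAt θ hline)
    exact (hinner.add ((hasDerivAt_id θ).const_mul _)).congr_deriv (by simp)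
  have hanti := antitone_of_hasDerivAt_nonpos hderiv fun θ => by
    simpa using (by linarith [hlog (v + θ • w) w] : _ ≤ (0:ℝ))
  have h10 := hanti zero_le_one
  simp only [one_smul, zero_smul, add_zero, mul_one, mul_zero, w, add_sub_cancel] at h10
  rw [inner_sub_right]
  linarith

theorem neg_mul_sq_add_mul_le {lamb M a s z : ℝ} (hlamb : 0 < lamb) (hz : 0 ≤ z)
    (hza : z ≤ a + s) :
    -lamb * a ^ 2 + M * s * a ≤ -(lamb / 4) * z ^ 2 + (lamb / 2 + M ^ 2 / lamb) * s ^ 2 := by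
  have hyoung : M * s * a ≤ lamb / 4 * a ^ 2 + M ^ 2 / lamb * s ^ 2 := by
    have hsq : (lamb * a / 2 - M * s) ^ 2 / lamb
        = lamb / 4 * a ^ 2 - M * s * a + M ^ 2 / lamb * s ^ 2 := by
      field_simp
      ring
    linarith [div_nonneg (sq_nonneg (lamb * a / 2 - M * s)) hlamb.le]
  have hz2 : z ^ 2 ≤ 2 * a ^ 2 + 2 * s ^ 2 := by
    nlinarith [pow_le_pow_left₀ hz hza 2, sq_nonneg (a - s)]
  nlinarith [mul_nonneg hlamb.le (sq_nonneg a)]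

variable {M : ℝ≥0}

theorem inner_sub_sub_map_sub_le (hlamb : 0 < lamb)
    (hosl : ∀ u v, ⟪u - v, b u - b v⟫ ≤ -lamb * ‖u - v‖ ^ 2) (hlip : LipschitzWith M b)
    (u v d : E) :
    ⟪u - v - d, b u - b v⟫
      ≤ -(lamb / 4) * ‖u - v - d‖ ^ 2 + (lamb / 2 + M ^ 2 / lamb) * ‖d‖ ^ 2 := by
  have hd : -⟪d, b u - b v⟫ ≤ M * ‖d‖ * ‖u - v‖ := by
    calc -⟪d, b u - b v⟫ ≤ ‖d‖ * ‖b u - b v‖ :=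
          (neg_le_abs _).trans (abs_real_inner_le_norm _ _)
      _ ≤ ‖d‖ * (M * ‖u - v‖) := by gcongr; exact hlip.norm_sub_le u v
      _ = M * ‖d‖ * ‖u - v‖ := by ring
  rw [inner_sub_left]
  exact le_trans (by linarith [hosl u v])
    (neg_mul_sq_add_mul_le hlamb (norm_nonneg _) (norm_sub_le _ _))

theorem norm_sub_sub_sq_le_integral [CompleteSpace E] (hlamb : 0 < lamb)
    (hosl : ∀ u v, ⟪u - v, b u - b v⟫ ≤ -lamb * ‖u - v‖ ^ 2) (hlip : LipschitzWith M b)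
    {Y Ybar D : ℝ → E} (hY : Continuous Y) (hYbar : Continuous Ybar) (hD : Continuous D)
    (hYD : ∀ t ≥ 0, Y t - Ybar t = (∫ s in (0:ℝ)..t, b (Y s) - b (Ybar s)) + D t)
    {t : ℝ} (ht : 0 ≤ t) :
    ‖Y t - Ybar t - D t‖ ^ 2
      ≤ 2 * (lamb / 2 + M ^ 2 / lamb)
        * ∫ s in (0:ℝ)..t, exp (-(lamb / 2 * (t - s))) * ‖D s‖ ^ 2 := by
  set Z : ℝ → E := fun s => Y s - Ybar s - D s
  have hg : Continuous fun s => b (Y s) - b (Ybar s) :=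
    (hlip.continuous.comp hY).sub (hlip.continuous.comp hYbar)
  have hZ : ∀ s ≥ 0, Z s = ∫ u in (0:ℝ)..s, b (Y u) - b (Ybar u) := fun s hs => by
    simp only [Z, hYD s hs, add_sub_cancel_right]
  have hZ' : ∀ s > 0, HasDerivAt Z (b (Y s) - b (Ybar s)) s := fun s hs =>
    (hg.integral_hasStrictDerivAt 0 s).hasDerivAt.congr_of_eventuallyEq <|
      (lt_mem_nhds hs).mono fun u hu => hZ u hu.le
  have h := le_exp_mul_add_integral_of_hasDerivAt_le (φ := fun s => ‖Z s‖ ^ 2) (μ := lamb / 2)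
    (f := fun s => 2 * (lamb / 2 + M ^ 2 / lamb) * ‖D s‖ ^ 2)
    (by fun_prop) (fun s hs => (hZ' s hs).norm_sq)
    (fun s _ => by linarith [inner_sub_sub_map_sub_le hlamb hosl hlip (Y s) (Ybar s) (D s)])
    (by fun_prop) ht
  simpa only [hZ 0 le_rfl, intervalIntegral.integral_same, norm_zero, ne_eq, OfNat.ofNat_ne_zero,
    not_false_eq_true, zero_pow, mul_zero, zero_add, mul_left_comm _ (2 * _ : ℝ),
    intervalIntegral.integral_const_mul] using h

theorem norm_sub_le_of_additive_noise [CompleteSpace E] (hlamb : 0 < lamb)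
    (hosl : ∀ u v, ⟪u - v, b u - b v⟫ ≤ -lamb * ‖u - v‖ ^ 2) (hlip : LipschitzWith M b)
    (Sig : E →L[ℝ] E) {W Wbar X Xbar : ℝ → E} (hW : Continuous W) (hWbar : Continuous Wbar)
    (hX : Continuous X) (hXbar : Continuous Xbar) {x : E}
    (hXeq : ∀ t ≥ 0, X t = x + (∫ s in (0:ℝ)..t, b (X s)) + Sig (W t))
    (hXbareq : ∀ t ≥ 0, Xbar t = x + (∫ s in (0:ℝ)..t, b (Xbar s)) + Sig (Wbar t))
    {t : ℝ} (ht : 0 ≤ t) :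
    ‖X t - Xbar t‖ ≤ ‖Sig‖ * (1 + √(2 * (lamb / 2 + M ^ 2 / lamb))) * (‖W t - Wbar t‖
      + √(∫ s in (0:ℝ)..t, exp (-(lamb / 2 * (t - s))) * ‖W s - Wbar s‖ ^ 2)) := by
  set K := 2 * (lamb / 2 + M ^ 2 / lamb)
  set I := ∫ s in (0:ℝ)..t, exp (-(lamb / 2 * (t - s))) * ‖W s - Wbar s‖ ^ 2
  have hdiff : ∀ τ ≥ 0, X τ - Xbar τ
      = (∫ s in (0:ℝ)..τ, b (X s) - b (Xbar s)) + Sig (W τ - Wbar τ) := fun τ hτ => by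
    have hbX : Continuous fun s => b (X s) := hlip.continuous.comp hX
    have hbXbar : Continuous fun s => b (Xbar s) := hlip.continuous.comp hXbar
    rw [intervalIntegral.integral_sub (hbX.intervalIntegrable 0 τ) (hbXbar.intervalIntegrable 0 τ),
      hXeq τ hτ, hXbareq τ hτ, map_sub]
    abel
  have hZ := norm_sub_sub_sq_le_integral hlamb hosl hlip hX hXbar
    (D := fun s => Sig (W s - Wbar s)) (by fun_prop) hdiff ht
  have hnoise : ∫ s in (0:ℝ)..t, exp (-(lamb / 2 * (t - s))) * ‖Sig (W s - Wbar s)‖ ^ 2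
      ≤ ‖Sig‖ ^ 2 * I := by
    rw [← intervalIntegral.integral_const_mul]
    refine intervalIntegral.integral_mono_on ht
      (Continuous.intervalIntegrable (by fun_prop) _ _)
      (Continuous.intervalIntegrable (by fun_prop) _ _) fun s _ => ?_
    rw [mul_left_comm, ← mul_pow]
    gcongr
    exact Sig.le_opNorm _
  have hK : 0 ≤ K := by positivity
  have hZt : ‖X t - Xbar t - Sig (W t - Wbar t)‖ ≤ √K * ‖Sig‖ * √I := by
    rw [← sqrt_sq (norm_nonneg _), ← sqrt_sq (norm_nonneg Sig), ← sqrt_mul hK, ← sqrt_mul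
      (mul_nonneg hK (sq_nonneg _))]
    exact sqrt_le_sqrt <| (hZ.trans (mul_le_mul_of_nonneg_left hnoise hK)).trans_eq (by ring)
  calc ‖X t - Xbar t‖ ≤ ‖X t - Xbar t - Sig (W t - Wbar t)‖ + ‖Sig‖ * ‖W t - Wbar t‖ :=
        (norm_le_norm_sub_add _ _).trans (by gcongr; exact Sig.le_opNorm _)
    _ ≤ ‖Sig‖ * (1 + √K) * (‖W t - Wbar t‖ + √I) := by
      nlinarith [mul_nonneg (mul_nonneg (norm_nonneg Sig) (sqrt_nonneg K))
        (norm_nonneg (W t - Wbar t)), mul_nonneg (norm_nonneg Sig) (sqrt_nonneg I)]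

end InnerProductSpace

theorem stmt_5_general {r : ℕ} (lamb : ℝ) (hlamb : 0 < lamb)
    (b : EuclideanSpace ℝ (Fin r) → EuclideanSpace ℝ (Fin r)) (hb : ContDiff ℝ 1 b)
    (M : ℝ) (hM : ∀ x, ‖fderiv ℝ b x‖ ≤ M)
    (hlog : ∀ x v, ⟪v, fderiv ℝ b x v⟫ ≤ -lamb * ‖v‖^2)
    (Sig : EuclideanSpace ℝ (Fin r) →L[ℝ] EuclideanSpace ℝ (Fin r)) :
    ∃ c > (0:ℝ), ∃ lam > (0:ℝ),
      ∀ (W Wbar : ℝ → EuclideanSpace ℝ (Fin r)),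
        Continuous W → Continuous Wbar → W 0 = 0 → Wbar 0 = 0 →
      ∀ (X Xbar : ℝ → EuclideanSpace ℝ (Fin r) → EuclideanSpace ℝ (Fin r)),
        (∀ x, Continuous fun t => X t x) → (∀ x, Continuous fun t => Xbar t x) →
        (∀ x, ∀ t ≥ (0:ℝ), X t x = x + (∫ s in (0:ℝ)..t, b (X s x)) + Sig (W t)) →
        (∀ x, ∀ t ≥ (0:ℝ), Xbar t x = x + (∫ s in (0:ℝ)..t, b (Xbar s x)) + Sig (Wbar t)) →
        ∀ t ≥ (0:ℝ), ∀ x,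
          ‖X t x - Xbar t x‖
            ≤ c * (‖W t - Wbar t‖
                + Real.sqrt (∫ s in (0:ℝ)..t, Real.exp (-(2*lam*(t-s))) * ‖W s - Wbar s‖^2)) := by
  have hbd : Differentiable ℝ b := hb.differentiable one_ne_zero
  have hlip : LipschitzWith M.toNNReal b := lipschitzWith_of_nnnorm_fderiv_le hbd fun x => by
    rw [← NNReal.coe_le_coe, coe_nnnorm, Real.coe_toNNReal']
    exact (hM x).trans (le_max_left _ _)
  refine ⟨‖Sig‖ * (1 + √(2 * (lamb / 2 + M.toNNReal ^ 2 / lamb))) + 1, by positivity,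
    lamb / 4, by positivity, ?_⟩
  intro W Wbar hW hWbar _ _ X Xbar hX hXbar hXeq hXbareq t ht x
  rw [show 2 * (lamb / 4) = lamb / 2 by ring]
  refine (norm_sub_le_of_additive_noise hlamb (inner_sub_map_sub_le_of_inner_fderiv_le hbd hlog)
    hlip Sig hW hWbar (hX x) (hXbar x) (hXeq x) (hXbareq x) ht).trans ?_
  gcongr
  linarith

/-- Time-uniform pathwise Wong–Zakai estimate for a homogeneous diffusion matrix: under
the log-norm condition on the `C¹` drift `b` (with bounded Jacobian), there exist `c, λ > 0`
(independent of the driving paths) such that the flows `X, X̄` of `dY = b(Y)dt + Σ dW`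
driven by continuous paths `W, W̄` satisfy, for all `t ≥ 0`,
`sup_x ‖X_t(x) − X̄_t(x)‖ ≤ c(‖W_t − W̄_t‖ + (∫_0^t e^{−2λ(t−s)}‖W_s − W̄_s‖² ds)^{1/2})`. -/
theorem stmt_5 {r : ℕ} (hr : 1 ≤ r) (lamb : ℝ) (hlamb : 0 < lamb)
    (b : EuclideanSpace ℝ (Fin r) → EuclideanSpace ℝ (Fin r)) (hb : ContDiff ℝ 1 b)
    (M : ℝ) (hM : ∀ x, ‖fderiv ℝ b x‖ ≤ M)
    (hlog : ∀ x v, ⟪v, fderiv ℝ b x v⟫ ≤ -lamb * ‖v‖^2)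
    (Sig : EuclideanSpace ℝ (Fin r) →L[ℝ] EuclideanSpace ℝ (Fin r)) :
    ∃ c > (0:ℝ), ∃ lam > (0:ℝ),
      ∀ (W Wbar : ℝ → EuclideanSpace ℝ (Fin r)),
        Continuous W → Continuous Wbar → W 0 = 0 → Wbar 0 = 0 →
      ∀ (X Xbar : ℝ → EuclideanSpace ℝ (Fin r) → EuclideanSpace ℝ (Fin r)),
        (∀ x, Continuous fun t => X t x) → (∀ x, Continuous fun t => Xbar t x) →
        (∀ x, ∀ t ≥ (0:ℝ), X t x = x + (∫ s in (0:ℝ)..t, b (X s x)) + Sig (W t)) →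
        (∀ x, ∀ t ≥ (0:ℝ), Xbar t x = x + (∫ s in (0:ℝ)..t, b (Xbar s x)) + Sig (Wbar t)) →
        ∀ t ≥ (0:ℝ), ∀ x,
          ‖X t x - Xbar t x‖
            ≤ c * (‖W t - Wbar t‖
                + Real.sqrt (∫ s in (0:ℝ)..t, Real.exp (-(2*lam*(t-s))) * ‖W s - Wbar s‖^2)) :=
  stmt_5_general lamb hlamb b hb M hM hlog Sig
end

section
/- Let r ≥ 1 and let b : ℝ^r → ℝ^r be continuously differentiable with M := sup_x ‖Db(x)‖ < ∞ and ⟨v, Db(x) v⟩ ≤ −λ_b ‖v‖^2 for all x, v, for some λ_b > 0. Let Σ be an r × r real matrix, W, W̄ : [0,∞) → ℝ^r continuous with W_0 = W̄_0 = 0, and let X, X̄ satisfy X_t(x) = x + ∫_0^t b(X_s(x)) ds + Σ W_t, X̄_t(x) = x + ∫_0^t b(X̄_s(x)) ds + Σ W̄_t. Define Δ_t(x) := (X_t(x) − X̄_t(x)) − Σ(W_t − W̄_t) = ∫_0^t (b(X_s(x)) − b(X̄_s(x))) ds. Then for every δ with 0 < δ < min(1, λ_b/M^2), setting λ(δ)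 := (1 − δ)(λ_b − δ M^2) and c(δ) := (2/δ)(1/4 + λ(δ)) ‖Σ‖^2, one has for all t ≥ 0 and all x: ‖Δ_t(x)‖^2 ≤ c(δ) ∫_0^t e^{−2λ(δ)(t−s)} ‖W_s − W̄_s‖^2 ds. -/
/-!
Write `Δ_t = X_t − X̄_t − Σ(W_t − W̄_t) = ∫_0^t (b(X_s) − b(X̄_s)) ds`. Since
`X_s − X̄_s = Δ_s + Σ(W_s − W̄_s)`, the mean value theorem along the segment from `X̄_s` to `X_s`,
together with the log-norm condition and `‖Db‖ ≤ M`, gives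
`d/ds ‖Δ_s‖² = 2⟪Δ_s, b(X_s) − b(X̄_s)⟫ ≤ −2λ_b‖Δ_s‖² + 2M‖Δ_s‖‖Σ(W_s − W̄_s)‖`.
Young's inequality absorbs the cross term at the cost of lowering the rate from `λ_b` to `λ(δ)`,
and the resulting linear differential inequality is integrated against `e^{2λ(δ)s}`.
-/

open scoped RealInnerProductSpace
open Real Set intervalIntegral

theorem mul_lt_of_lt_div_of_nonneg {δ a c : ℝ} (hδ : 0 < δ) (hc : 0 ≤ c) (h : δ < a / c) :
    δ * c < a := by
  rcases hc.eq_or_lt with rfl | hc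
  · -- `a / 0 = 0`
    rw [div_zero] at h; linarith
  · exact (lt_div_iff₀ hc).mp h

theorem le_integral_exp_mul_of_hasDerivAt_le {u u' φ : ℝ → ℝ} {a t : ℝ}
    (hu : ∀ s, HasDerivAt u (u' s) s) (hφ : Continuous φ) (hu0 : u 0 = 0) (ht : 0 ≤ t)
    (hle : ∀ s ∈ Ioo 0 t, u' s ≤ -a * u s + φ s) :
    u t ≤ ∫ s in (0:ℝ)..t, exp (-(a * (t - s))) * φ s := by
  have hq : Continuous fun s => exp (a * s) * φ s := by fun_prop
  set H : ℝ → ℝ := fun s => exp (a * s) * u s - ∫ τ in (0:ℝ)..s, exp (a * τ) * φ τ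
  have hH : ∀ s, HasDerivAt H (exp (a * s) * (u' s + a * u s - φ s)) s := by
    intro s
    have hexp : HasDerivAt (fun s => exp (a * s)) (exp (a * s) * a) s := by
      simpa using ((hasDerivAt_id s).const_mul a).exp
    refine ((hexp.mul (hu s)).sub (integral_hasDerivAt_right (hq.intervalIntegrable 0 s)
      (hq.stronglyMeasurableAtFilter _ _) hq.continuousAt)).congr_deriv ?_
    ring
  have hanti : AntitoneOn H (Icc 0 t) := by
    refine antitoneOn_of_deriv_nonpos (convex_Icc 0 t)
      (fun s _ => (hH s).continuousAt.continuousWithinAt)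
      (fun s _ => (hH s).differentiableAt.differentiableWithinAt) fun s hs => ?_
    rw [interior_Icc] at hs
    rw [(hH s).deriv]
    exact mul_nonpos_of_nonneg_of_nonpos (exp_pos _).le (by linarith [hle s hs])
  have hHt : H t ≤ 0 := by
    simpa [H, hu0] using hanti (left_mem_Icc.mpr ht) (right_mem_Icc.mpr ht) ht
  have hexp_split : ∀ s, exp (-(a * (t - s))) = exp (-(a * t)) * exp (a * s) := fun s => by
    rw [← exp_add]; congr 1; ring
  simp_rw [hexp_split, mul_assoc, intervalIntegral.integral_const_mul]
  calc u t = exp (-(a * t)) * (exp (a * t) * u t) := by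
        rw [← mul_assoc, ← exp_add, neg_add_cancel, exp_zero, one_mul]
    _ ≤ _ := mul_le_mul_of_nonneg_left (by linarith [hHt]) (exp_pos _).le

theorem inner_sub_le_of_fderiv {E : Type*} [NormedAddCommGroup E] [InnerProductSpace ℝ E]
    {b : E → E} {lamb M : ℝ} (hb : Differentiable ℝ b) (hM : ∀ x, ‖fderiv ℝ b x‖ ≤ M)
    (hlog : ∀ x v, ⟪v, fderiv ℝ b x v⟫ ≤ -lamb * ‖v‖^2) {y z v w : E} (h : y - z = v + w) :
    ⟪v, b y - b z⟫ ≤ -lamb * ‖v‖^2 + M * (‖v‖ * ‖w‖) := by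
  set f : ℝ → ℝ := fun θ => ⟪v, b (z + θ • (y - z))⟫
  have hf : ∀ θ : ℝ, HasDerivAt f ⟪v, fderiv ℝ b (z + θ • (y - z)) (y - z)⟫ θ := by
    intro θ
    have hseg : HasDerivAt (fun θ : ℝ => z + θ • (y - z)) (y - z) θ := by
      simpa using ((hasDerivAt_id θ).smul_const (y - z)).const_add z
    simpa using (hasDerivAt_const θ v).inner ℝ ((hb _).hasFDerivAt.comp_hasDerivAt θ hseg)
  have hderiv : ∀ θ, deriv f θ ≤ -lamb * ‖v‖^2 + M * (‖v‖ * ‖w‖) := by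
    intro θ
    rw [(hf θ).deriv, h, map_add, inner_add_right]
    refine add_le_add (hlog _ v) ((real_inner_le_norm _ _).trans ?_)
    rw [mul_left_comm]
    exact mul_le_mul_of_nonneg_left ((fderiv ℝ b _).le_of_opNorm_le (hM _) w) (norm_nonneg v)
  have := image_sub_le_mul_sub_of_deriv_le (fun θ => (hf θ).differentiableAt) hderiv zero_le_one
  simpa [f, inner_sub_right] using this

theorem two_inner_sub_le_of_fderiv {E : Type*} [NormedAddCommGroup E] [InnerProductSpace ℝ E]
    {b : E → E} {lamb M δ : ℝ} (hb : Differentiable ℝ b) (hM : ∀ x, ‖fderiv ℝ b x‖ ≤ M)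
    (hlog : ∀ x v, ⟪v, fderiv ℝ b x v⟫ ≤ -lamb * ‖v‖^2) (hδ : 0 < δ) (hδ1 : δ < 1)
    (hδM : δ * M^2 < lamb) {y z v w : E} (h : y - z = v + w) :
    2 * ⟪v, b y - b z⟫ ≤ -(2 * ((1-δ)*(lamb - δ*M^2))) * ‖v‖^2
      + (2/δ) * (1/4 + (1-δ)*(lamb - δ*M^2)) * ‖w‖^2 := by
  set lam := (1-δ)*(lamb - δ*M^2)
  have hlam : 0 < lam := mul_pos (by linarith) (by linarith)
  set κ := 2 * δ * (lamb + (1-δ)*M^2)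
  have hκ : 0 < κ := by
    have : 0 < lamb + (1-δ)*M^2 := by nlinarith [sq_nonneg M]
    positivity
  have hκB : M^2 ≤ κ * ((2/δ) * (1/4 + lam)) := by
    have hrw : κ * ((2/δ) * (1/4 + lam)) = (1 + 4*lam) * (lamb + (1-δ)*M^2) := by
      field_simp; ring
    rw [hrw]
    nlinarith [mul_pos hlam (show 0 < lamb + (1-δ)*M^2 by nlinarith [sq_nonneg M])]
  have young : ∀ a c : ℝ, 2 * M * (a * c) ≤ κ * a^2 + (2/δ) * (1/4 + lam) * c^2 := fun a c => by
    nlinarith [sq_nonneg (κ * a - M * c), mul_nonneg (sub_nonneg.mpr hκB) (sq_nonneg c)]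
  have hκ_eq : -(2 * lamb) + κ = -(2 * lam) := by ring
  nlinarith [inner_sub_le_of_fderiv hb hM hlog h, young ‖v‖ ‖w‖]

theorem stmt_6_general {r : ℕ} (lamb : ℝ)
    (b : EuclideanSpace ℝ (Fin r) → EuclideanSpace ℝ (Fin r)) (hb : ContDiff ℝ 1 b)
    (M : ℝ) (hM : ∀ x, ‖fderiv ℝ b x‖ ≤ M)
    (hlog : ∀ x v, ⟪v, fderiv ℝ b x v⟫ ≤ -lamb * ‖v‖^2)
    (Sig : EuclideanSpace ℝ (Fin r) →L[ℝ] EuclideanSpace ℝ (Fin r))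
    (W Wbar : ℝ → EuclideanSpace ℝ (Fin r))
    (hW : Continuous W) (hWbar : Continuous Wbar)
    (X Xbar : ℝ → EuclideanSpace ℝ (Fin r) → EuclideanSpace ℝ (Fin r))
    (hXc : ∀ x, Continuous fun t => X t x) (hXbarc : ∀ x, Continuous fun t => Xbar t x)
    (hX : ∀ x, ∀ t ≥ (0:ℝ), X t x = x + (∫ s in (0:ℝ)..t, b (X s x)) + Sig (W t))
    (hXbar : ∀ x, ∀ t ≥ (0:ℝ),
        Xbar t x = x + (∫ s in (0:ℝ)..t, b (Xbar s x)) + Sig (Wbar t)) :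
    ∀ δ : ℝ, 0 < δ → δ < min 1 (lamb / M^2) →
      ∀ t ≥ (0:ℝ), ∀ x,
        ‖(X t x - Xbar t x) - Sig (W t - Wbar t)‖^2
          ≤ (2/δ) * (1/4 + (1-δ)*(lamb - δ*M^2)) * ‖Sig‖^2
              * ∫ s in (0:ℝ)..t,
                  Real.exp (-(2*((1-δ)*(lamb - δ*M^2))*(t-s))) * ‖W s - Wbar s‖^2 := by
  intro δ hδ hδlt t ht x
  obtain ⟨hδ1, hδM⟩ := lt_min_iff.mp hδlt
  replace hδM : δ * M^2 < lamb := mul_lt_of_lt_div_of_nonneg hδ (sq_nonneg M) hδM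
  have hbc := hb.continuous
  set g : ℝ → EuclideanSpace ℝ (Fin r) := fun s => b (X s x) - b (Xbar s x)
  have hg : Continuous g := (hbc.comp (hXc x)).sub (hbc.comp (hXbarc x))
  set F : ℝ → EuclideanSpace ℝ (Fin r) := fun s => ∫ u in (0:ℝ)..s, g u
  have hF : ∀ s, HasDerivAt F (g s) s := fun s =>
    integral_hasDerivAt_right (hg.intervalIntegrable 0 s) (hg.stronglyMeasurableAtFilter _ _)
      hg.continuousAt
  have hXF : ∀ s ≥ 0, X s x - Xbar s x = F s + Sig (W s - Wbar s) := by
    intro s hs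
    have hFs : F s = (∫ u in (0:ℝ)..s, b (X u x)) - ∫ u in (0:ℝ)..s, b (Xbar u x) :=
      integral_sub ((hbc.comp (hXc x)).intervalIntegrable 0 s)
        ((hbc.comp (hXbarc x)).intervalIntegrable 0 s)
    rw [hX x s hs, hXbar x s hs, hFs, map_sub]
    abel
  set lam := (1-δ)*(lamb - δ*M^2)
  set B := (2/δ) * (1/4 + lam)
  have hB : 0 ≤ B := by
    have : 0 ≤ lam := mul_nonneg (by linarith) (by linarith)
    positivity
  have hkey : ∀ s ∈ Ioo 0 t, 2 * ⟪F s, g s⟫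
      ≤ -(2*lam) * ‖F s‖^2 + B * ‖Sig‖^2 * ‖W s - Wbar s‖^2 := fun s hs =>
    calc 2 * ⟪F s, g s⟫ ≤ -(2*lam) * ‖F s‖^2 + B * ‖Sig (W s - Wbar s)‖^2 :=
          two_inner_sub_le_of_fderiv (hb.differentiable one_ne_zero) hM hlog hδ hδ1 hδM
            (hXF s hs.1.le)
      _ ≤ -(2*lam) * ‖F s‖^2 + B * (‖Sig‖ * ‖W s - Wbar s‖)^2 := by
          gcongr
          exact Sig.le_opNorm _
      _ = _ := by ring
  have := le_integral_exp_mul_of_hasDerivAt_le (fun s => (hF s).norm_sq)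
    (φ := fun s => B * ‖Sig‖^2 * ‖W s - Wbar s‖^2) (by fun_prop) (by simp [F]) ht hkey
  rw [hXF t ht, add_sub_cancel_right]
  refine this.trans_eq ?_
  rw [← intervalIntegral.integral_const_mul]
  congr 1 with s
  ring

/-- Quantitative pathwise estimate for `Δ_t(x) := (X_t(x) − X̄_t(x)) − Σ(W_t − W̄_t)`:
under the log-norm condition `⟪v, Db(x)v⟫ ≤ −λ_b‖v‖²` and `‖Db‖ ≤ M`, for every
`0 < δ < min(1, λ_b/M²)`, with `λ(δ) := (1−δ)(λ_b − δM²)` and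
`c(δ) := (2/δ)(1/4 + λ(δ))‖Σ‖²`, one has
`‖Δ_t(x)‖² ≤ c(δ) ∫_0^t e^{−2λ(δ)(t−s)}‖W_s − W̄_s‖² ds`. -/
theorem stmt_6 {r : ℕ} (hr : 1 ≤ r) (lamb : ℝ) (hlamb : 0 < lamb)
    (b : EuclideanSpace ℝ (Fin r) → EuclideanSpace ℝ (Fin r)) (hb : ContDiff ℝ 1 b)
    (M : ℝ) (hM : ∀ x, ‖fderiv ℝ b x‖ ≤ M)
    (hlog : ∀ x v, ⟪v, fderiv ℝ b x v⟫ ≤ -lamb * ‖v‖^2)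
    (Sig : EuclideanSpace ℝ (Fin r) →L[ℝ] EuclideanSpace ℝ (Fin r))
    (W Wbar : ℝ → EuclideanSpace ℝ (Fin r))
    (hW : Continuous W) (hWbar : Continuous Wbar) (hW0 : W 0 = 0) (hWbar0 : Wbar 0 = 0)
    (X Xbar : ℝ → EuclideanSpace ℝ (Fin r) → EuclideanSpace ℝ (Fin r))
    (hXc : ∀ x, Continuous fun t => X t x) (hXbarc : ∀ x, Continuous fun t => Xbar t x)
    (hX : ∀ x, ∀ t ≥ (0:ℝ), X t x = x + (∫ s in (0:ℝ)..t, b (X s x)) + Sig (W t))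
    (hXbar : ∀ x, ∀ t ≥ (0:ℝ),
        Xbar t x = x + (∫ s in (0:ℝ)..t, b (Xbar s x)) + Sig (Wbar t)) :
    ∀ δ : ℝ, 0 < δ → δ < min 1 (lamb / M^2) →
      ∀ t ≥ (0:ℝ), ∀ x,
        ‖(X t x - Xbar t x) - Sig (W t - Wbar t)‖^2
          ≤ (2/δ) * (1/4 + (1-δ)*(lamb - δ*M^2)) * ‖Sig‖^2
              * ∫ s in (0:ℝ)..t,
                  Real.exp (-(2*((1-δ)*(lamb - δ*M^2))*(t-s))) * ‖W s - Wbar s‖^2 :=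
  stmt_6_general lamb b hb M hM hlog Sig W Wbar hW hWbar X Xbar hXc hXbarc hX hXbar
end

section
/- Let λ > 0, C ≥ 0 and s ≥ 0. Let A : [s,∞) → Matrix(r,r,ℝ) be continuous with ⟨v, A(t) v⟩ ≤ −λ ‖v‖^2 for all t ≥ s and v ∈ ℝ^r, and let G : [s,∞) → Matrix(m,r,ℝ) be continuous with ‖G(t)‖_F ≤ C e^{−2λ(t−s)} for all t ≥ s. Let H : [s,∞) → Matrix(m,r,ℝ) be differentiable with H(s) = 0 and H'(t) = G(t) + H(t) · A(t) for all t ≥ s. Then for all t ≥ s, ‖H(t)‖_F ≤ (C/λ) e^{−λ(t−s)}. -/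
/-!
Multiplying by `e^{λ(t-s)}` turns `H' = G + H·A` into `K' = e^{λ(t-s)} G + K·(A + λ)`, whose
homogeneous part does not increase the Frobenius norm, while the forcing has norm at most
`C e^{-λ(t-s)}`. Hence `d/dt ‖K‖_F ≤ C e^{-λ(t-s)}`, so `‖K(t)‖_F ≤ C/λ`. The norm is not
differentiable where `K` vanishes, so the argument runs on `‖K‖_F²`, through `√(‖K‖_F² + ε²)`.
-/

open Set Real Matrix

theorem sqrt_le_sqrt_add_of_deriv_le_two_mul_sqrt {q q' g B : ℝ → ℝ} {a : ℝ}
    (hq : ∀ t ∈ Ici a, HasDerivWithinAt q (q' t) (Ici a) t) (hq₀ : ∀ t ∈ Ici a, 0 ≤ q t)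
    (hB : ∀ t ∈ Ici a, HasDerivWithinAt B (g t) (Ici a) t) (hg : ∀ t ∈ Ici a, 0 ≤ g t)
    (hq' : ∀ t ∈ Ici a, q' t ≤ 2 * g t * √(q t)) :
    ∀ t ∈ Ici a, √(q t) ≤ √(q a) + (B t - B a) := by
  intro t ht
  refine le_of_forall_pos_le_add fun ε hε => ?_
  have hpos : ∀ u ∈ Ici a, 0 < q u + ε ^ 2 := fun u hu => by positivity [hq₀ u hu]
  have hreg : √(q t + ε ^ 2) ≤ √(q a + ε ^ 2) + (B t - B a) := by
    have hIcc : Icc a t ⊆ Ici a := Icc_subset_Ici_self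
    refine image_le_of_deriv_right_le_deriv_boundary (f := fun u => √(q u + ε ^ 2))
      (f' := fun u => q' u / (2 * √(q u + ε ^ 2))) (B' := g)
      (B := fun u => √(q a + ε ^ 2) + (B u - B a)) ?_ (fun u hu => ?_) (by simp) ?_
      (fun u hu => ?_) (fun u hu => ?_) ⟨ht, le_rfl⟩
    · exact fun u hu => (((hq u (hIcc hu)).add_const _).sqrt
        (hpos u (hIcc hu)).ne').continuousWithinAt.mono hIcc
    · exact (((hq u hu.1).add_const _).sqrt (hpos u hu.1).ne').mono (Ici_subset_Ici.2 hu.1)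
    · exact fun u hu => (((hB u (hIcc hu)).sub_const _).const_add _).continuousWithinAt.mono hIcc
    · exact (((hB u hu.1).sub_const _).const_add _).mono (Ici_subset_Ici.2 hu.1)
    · have hsq : √(q u) ≤ √(q u + ε ^ 2) := Real.sqrt_le_sqrt (by linarith [sq_nonneg ε])
      rw [div_le_iff₀ (by positivity [Real.sqrt_pos.2 (hpos u hu.1)])]
      calc q' u ≤ 2 * g u * √(q u) := hq' u hu.1
        _ ≤ 2 * g u * √(q u + ε ^ 2) := mul_le_mul_of_nonneg_left hsq (by linarith [hg u hu.1])
        _ = g u * (2 * √(q u + ε ^ 2)) := by ring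
  calc √(q t) ≤ √(q t + ε ^ 2) := Real.sqrt_le_sqrt (by linarith [sq_nonneg ε])
    _ ≤ √(q a + ε ^ 2) + (B t - B a) := hreg
    _ ≤ √(q a) + ε + (B t - B a) := by
      have hsa := Real.sq_sqrt (hq₀ a self_mem_Ici)
      gcongr
      rw [Real.sqrt_le_iff]
      exact ⟨by positivity, by nlinarith [Real.sqrt_nonneg (q a)]⟩
    _ = _ := by ring

theorem sqrt_le_div_mul_exp_of_deriv_le {φ φ' : ℝ → ℝ} {lam C s : ℝ} (hlam : 0 < lam)
    (hC : 0 ≤ C) (hφ : ∀ t ∈ Ici s, HasDerivWithinAt φ (φ' t) (Ici s) t)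
    (hφ₀ : ∀ t ∈ Ici s, 0 ≤ φ t) (hφs : φ s = 0)
    (hφ' : ∀ t ∈ Ici s, φ' t ≤ 2 * (C * exp (-(2 * lam * (t - s)))) * √(φ t) - 2 * lam * φ t) :
    ∀ t ∈ Ici s, √(φ t) ≤ C / lam * exp (-lam * (t - s)) := by
  set e : ℝ → ℝ := fun t => exp (lam * (t - s))
  have he : ∀ t, HasDerivAt e (lam * e t) t := fun t => by
    simpa [e, mul_comm] using (((hasDerivAt_id t).sub_const s).const_mul lam).exp
  have he_inv : ∀ t, e t * exp (-lam * (t - s)) = 1 := fun t => by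
    simp [e, ← exp_add]
  have hsqrt : ∀ t, √(e t ^ 2 * φ t) = e t * √(φ t) := fun t => by
    rw [Real.sqrt_mul (by positivity), Real.sqrt_sq (exp_pos _).le]
  have hq : ∀ t ∈ Ici s, HasDerivWithinAt (fun t => e t ^ 2 * φ t)
      (2 * e t * (lam * e t) * φ t + e t ^ 2 * φ' t) (Ici s) t := fun t ht => by
    simpa using ((he t).fun_pow 2).hasDerivWithinAt.fun_mul (hφ t ht)
  have hB : ∀ t ∈ Ici s, HasDerivWithinAt (fun t => -(C / lam) * exp (-lam * (t - s)))
      (C * exp (-lam * (t - s))) (Ici s) t := fun t _ => by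
    refine ((((hasDerivAt_id t).sub_const s).const_mul (-lam)).exp.const_mul
      (-(C / lam))).hasDerivWithinAt.congr_deriv ?_
    field_simp
    rfl
  have key := sqrt_le_sqrt_add_of_deriv_le_two_mul_sqrt hq
    (fun t ht => by positivity [hφ₀ t ht]) hB (fun t _ => by positivity) (fun t ht => ?_)
  · intro t ht
    have hdecay : e t * √(φ t) ≤ C / lam := by
      have hB₀ : 0 ≤ C / lam * exp (-lam * (t - s)) := by positivity
      have := key t ht
      rw [hsqrt t, hφs, mul_zero, Real.sqrt_zero, sub_self, mul_zero, exp_zero] at this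
      linarith
    calc √(φ t) = exp (-lam * (t - s)) * (e t * √(φ t)) := by
          rw [← mul_assoc, mul_comm (exp _), he_inv, one_mul]
      _ ≤ exp (-lam * (t - s)) * (C / lam) := by gcongr
      _ = _ := mul_comm ..
  · have hexp2 : e t ^ 2 * exp (-(2 * lam * (t - s))) = 1 := by
      simp only [e, sq, ← exp_add, exp_eq_one_iff]
      ring
    calc 2 * e t * (lam * e t) * φ t + e t ^ 2 * φ' t
        = e t ^ 2 * (2 * lam * φ t + φ' t) := by ring
      _ ≤ e t ^ 2 * (2 * (C * exp (-(2 * lam * (t - s)))) * √(φ t)) := by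
          gcongr; linarith [hφ' t ht]
      _ = 2 * C * √(φ t) * (e t ^ 2 * exp (-(2 * lam * (t - s)))) := by ring
      _ = 2 * C * √(φ t) * (e t * exp (-lam * (t - s))) := by rw [hexp2, he_inv]
      _ = _ := by rw [hsqrt]; ring

section Frobenius

variable {ι κ : Type*} [Fintype ι] [Fintype κ]

theorem hasDerivWithinAt_sum_sum_sq {H : ℝ → Matrix ι κ ℝ} {H' : Matrix ι κ ℝ} {S : Set ℝ}
    {t : ℝ} (hH : ∀ i j, HasDerivWithinAt (fun u => H u i j) (H' i j) S t) :
    HasDerivWithinAt (fun u => ∑ i, ∑ j, H u i j ^ 2) (2 * ∑ i, ∑ j, H t i j * H' i j) S t := by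
  simp only [Finset.mul_sum]
  refine HasDerivWithinAt.fun_sum fun i _ => HasDerivWithinAt.fun_sum fun j _ => ?_
  exact ((hH i j).fun_pow 2).congr_deriv (by push_cast; ring)

theorem sum_sum_mul_le_sqrt_mul_sqrt (M N : Matrix ι κ ℝ) :
    ∑ i, ∑ j, M i j * N i j ≤ √(∑ i, ∑ j, M i j ^ 2) * √(∑ i, ∑ j, N i j ^ 2) := by
  simpa only [Fintype.sum_prod_type] using
    Real.sum_mul_le_sqrt_mul_sqrt Finset.univ (fun p : ι × κ => M p.1 p.2) (fun p => N p.1 p.2)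

theorem sum_sum_mul_mul_le_neg_mul {A : Matrix κ κ ℝ} {lam : ℝ}
    (hA : ∀ v, v ⬝ᵥ A *ᵥ v ≤ -lam * (v ⬝ᵥ v)) (M : Matrix ι κ ℝ) :
    ∑ i, ∑ j, M i j * (M * A) i j ≤ -lam * ∑ i, ∑ j, M i j ^ 2 := by
  rw [Finset.mul_sum]
  refine Finset.sum_le_sum fun i _ => ?_
  have hrow : ∑ j, M i j * (M * A) i j = M i ⬝ᵥ A *ᵥ M i := by
    rw [dotProduct_mulVec, dotProduct_comm]
    rfl
  simpa only [hrow, dotProduct, sq] using hA (M i)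

end Frobenius

theorem stmt_11_general {r m : ℕ} (lam C s : ℝ) (hlam : 0 < lam) (hC : 0 ≤ C)
    (A : ℝ → Matrix (Fin r) (Fin r) ℝ)
    (hlog : ∀ t ∈ Set.Ici s, ∀ v : Fin r → ℝ, v ⬝ᵥ (A t).mulVec v ≤ -lam * (v ⬝ᵥ v))
    (G : ℝ → Matrix (Fin m) (Fin r) ℝ)
    (hGbd : ∀ t ∈ Set.Ici s,
        Real.sqrt (∑ i, ∑ j, (G t i j)^2) ≤ C * Real.exp (-(2*lam*(t-s))))
    (H : ℝ → Matrix (Fin m) (Fin r) ℝ) (hHs : H s = 0)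
    (hH : ∀ t ∈ Set.Ici s, ∀ i j,
        HasDerivWithinAt (fun u => H u i j) ((G t + H t * A t) i j) (Set.Ici s) t) :
    ∀ t ∈ Set.Ici s,
      Real.sqrt (∑ i, ∑ j, (H t i j)^2) ≤ (C/lam) * Real.exp (-lam * (t - s)) := by
  refine sqrt_le_div_mul_exp_of_deriv_le hlam hC
    (fun t ht => hasDerivWithinAt_sum_sum_sq (hH t ht)) (fun t _ => by positivity)
    (by simp [hHs]) fun t ht => ?_
  have hsplit : ∑ i, ∑ j, H t i j * (G t + H t * A t) i j =
      ∑ i, ∑ j, H t i j * G t i j + ∑ i, ∑ j, H t i j * (H t * A t) i j := by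
    simp only [Matrix.add_apply, mul_add, Finset.sum_add_distrib]
  have hforcing := (sum_sum_mul_le_sqrt_mul_sqrt (H t) (G t)).trans
    (mul_le_mul_of_nonneg_left (hGbd t ht) (sqrt_nonneg _))
  have hdissipation := sum_sum_mul_mul_le_neg_mul (hlog t ht) (H t)
  rw [hsplit]
  linarith

/-- Decay of the inhomogeneous variational (Hessian) equation: if `⟨v, A(t)v⟩ ≤ −λ‖v‖²`,
`‖G(t)‖_F ≤ C e^{−2λ(t−s)}`, `H(s) = 0` and `H' = G + H·A` on `[s,∞)`, then
`‖H(t)‖_F ≤ (C/λ) e^{−λ(t−s)}`. -/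
theorem stmt_11 {r m : ℕ} (lam C s : ℝ) (hlam : 0 < lam) (hC : 0 ≤ C) (hs : 0 ≤ s)
    (A : ℝ → Matrix (Fin r) (Fin r) ℝ) (hA : ContinuousOn A (Set.Ici s))
    (hlog : ∀ t ∈ Set.Ici s, ∀ v : Fin r → ℝ, v ⬝ᵥ (A t).mulVec v ≤ -lam * (v ⬝ᵥ v))
    (G : ℝ → Matrix (Fin m) (Fin r) ℝ) (hG : ContinuousOn G (Set.Ici s))
    (hGbd : ∀ t ∈ Set.Ici s,
        Real.sqrt (∑ i, ∑ j, (G t i j)^2) ≤ C * Real.exp (-(2*lam*(t-s))))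
    (H : ℝ → Matrix (Fin m) (Fin r) ℝ) (hHs : H s = 0)
    (hH : ∀ t ∈ Set.Ici s, ∀ i j,
        HasDerivWithinAt (fun u => H u i j) ((G t + H t * A t) i j) (Set.Ici s) t) :
    ∀ t ∈ Set.Ici s,
      Real.sqrt (∑ i, ∑ j, (H t i j)^2) ≤ (C/lam) * Real.exp (-lam * (t - s)) :=
  stmt_11_general lam C s hlam hC A hlog G hGbd H hHs hH
end

section
/- Let σ : ℝ → ℝ be continuous with 0 < σ₋ ≤ σ(y) ≤ σ₊ for all y, let θ(x) := ∫_0^x (1/σ(y)) dy and b^θ := (b/σ) ∘ θ^{-1} for some b : ℝ → ℝ. Assume b^θ is continuously differentiable with M := sup_z |(b^θ)'(z)| < ∞ and (b^θ)'(z) ≤ −λ₀ < 0 for all z. Let h, h̄ : [0,∞) → ℝ be continuous with h_0 = h̄_0 = 0, and suppose 𝒳, 𝒳̄ : [0,∞) × ℝ → ℝ are continuous in time and satisfy 𝒳_t(x) = θ(x) + ∫_0^t b^θ(𝒳_s(x)) ds + h_t and 𝒳̄_t(x) = θ(x) + ∫_0^t b^θ(𝒳̄_s(x)) ds + h̄_t.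 Then there exist constants c > 0 and λ > 0, depending only on λ₀, M, σ₋ and σ₊, such that for all t ≥ 0, sup_{x ∈ ℝ} |θ^{-1}(𝒳_t(x)) − θ^{-1}(𝒳̄_t(x))| ≤ c ( |h_t − h̄_t| + ( ∫_0^t e^{−2λ(t−s)} |h_s − h̄_s|^2 ds )^{1/2} ). -/
/-- The Lamperti transformation `θ(x) := ∫_0^x dy/σ(y)`. -/
noncomputable def lamperti (σ : ℝ → ℝ) (x : ℝ) : ℝ := ∫ y in (0:ℝ)..x, 1/σ y

noncomputable def lampertiInv (σ : ℝ → ℝ) : ℝ → ℝ := Function.invFun (lamperti σ)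

/-- The transformed drift `b^θ := (b/σ) ∘ θ⁻¹`. -/
noncomputable def driftTheta (b σ : ℝ → ℝ) (z : ℝ) : ℝ :=
  b (lampertiInv σ z) / σ (lampertiInv σ z)

/-! θ has derivative `1/σ ≥ 1/σ₊`, so `θ⁻¹` is `σ₊`-Lipschitz and it suffices to bound
`D = 𝒳 - 𝒳̄`. Write `D = Y + g` with `g = h - h̄` and `Y_t = ∫_0^t (b^θ(𝒳_s) - b^θ(𝒳̄_s)) ds`.
Since `(b^θ)' ≤ -λ₀` and `|(b^θ)'| ≤ M`, we have `D Y' ≤ -λ₀ D²` and `|Y'| ≤ M |D|`, and Young's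
inequality turns this into `(e^{λ₀ s} Y_s²)' ≤ K e^{λ₀ s} g_s²` with `K = λ₀ + (λ₀ + M)²/λ₀`.
Integrating gives `Y_t² ≤ K ∫_0^t e^{-λ₀(t-s)} g_s² ds`, i.e. the claim with `λ = λ₀/2` and
`c = σ₊ (1 + √K)`. -/

open Set Filter Real

section Lamperti

variable {σ : ℝ → ℝ} {σp : ℝ}

lemma hasDerivAt_lamperti (hσ : Continuous σ) (hσ0 : ∀ y, σ y ≠ 0) (x : ℝ) :
    HasDerivAt (lamperti σ) (1 / σ x) x :=
  ((continuous_const.div hσ hσ0).integral_hasStrictDerivAt 0 x).hasDerivAt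

lemma div_le_lamperti_sub (hσ : Continuous σ) (hpos : ∀ y, 0 < σ y) (hle : ∀ y, σ y ≤ σp)
    {x y : ℝ} (hxy : x ≤ y) : (y - x) / σp ≤ lamperti σ y - lamperti σ x := by
  have hderiv := hasDerivAt_lamperti hσ (fun y => (hpos y).ne')
  rw [div_eq_inv_mul]
  refine mul_sub_le_image_sub_of_le_deriv (fun x => (hderiv x).differentiableAt)
    (fun z => ?_) hxy
  rw [(hderiv z).deriv, one_div]
  exact inv_anti₀ (hpos z) (hle z)

lemma lamperti_surjective (hσ : Continuous σ) (hpos : ∀ y, 0 < σ y) (hle : ∀ y, σ y ≤ σp) :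
    Function.Surjective (lamperti σ) := by
  have hσp : 0 < σp := (hpos 0).trans_le (hle 0)
  have hzero : lamperti σ 0 = 0 := intervalIntegral.integral_same
  have hcont : Continuous (lamperti σ) := continuous_iff_continuousAt.2 fun x =>
    (hasDerivAt_lamperti hσ (fun y => (hpos y).ne') x).continuousAt
  refine hcont.surjective ?_ ?_
  · refine tendsto_atTop_mono' _ ?_ (tendsto_id.atTop_div_const hσp)
    filter_upwards [eventually_ge_atTop 0] with y hy
    simpa [hzero] using div_le_lamperti_sub hσ hpos hle hy
  · refine tendsto_atBot_mono' _ ?_ (tendsto_id.atBot_div_const hσp)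
    filter_upwards [eventually_le_atBot 0] with y hy
    have := div_le_lamperti_sub hσ hpos hle hy
    rw [hzero, zero_sub, zero_sub, neg_div, neg_le_neg_iff] at this
    exact this

lemma abs_sub_le_mul_abs_lamperti_sub (hσ : Continuous σ) (hpos : ∀ y, 0 < σ y)
    (hle : ∀ y, σ y ≤ σp) (x y : ℝ) : |x - y| ≤ σp * |lamperti σ x - lamperti σ y| := by
  wlog hxy : x ≤ y generalizing x y
  · rw [abs_sub_comm, abs_sub_comm (lamperti σ x)]
    exact this y x (le_of_not_ge hxy)
  have hσp : 0 < σp := (hpos 0).trans_le (hle 0)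
  have := (div_le_iff₀' hσp).1 (div_le_lamperti_sub hσ hpos hle hxy)
  rw [abs_sub_comm, abs_of_nonneg (sub_nonneg.2 hxy), abs_sub_comm]
  exact this.trans (mul_le_mul_of_nonneg_left (le_abs_self _) hσp.le)

lemma abs_lampertiInv_sub_le (hσ : Continuous σ) (hpos : ∀ y, 0 < σ y) (hle : ∀ y, σ y ≤ σp)
    (a c : ℝ) : |lampertiInv σ a - lampertiInv σ c| ≤ σp * |a - c| := by
  have hsurj := lamperti_surjective hσ hpos hle
  have ha : lamperti σ (lampertiInv σ a) = a := Function.invFun_eq (hsurj a)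
  have hc : lamperti σ (lampertiInv σ c) = c := Function.invFun_eq (hsurj c)
  simpa only [ha, hc] using
    abs_sub_le_mul_abs_lamperti_sub hσ hpos hle (lampertiInv σ a) (lampertiInv σ c)

end Lamperti

section Dissipative

variable {f : ℝ → ℝ}

lemma abs_sub_le_of_abs_deriv_le (hf : Differentiable ℝ f) {M : ℝ} (hM : ∀ z, |deriv f z| ≤ M)
    (a c : ℝ) : |f a - f c| ≤ M * |a - c| :=
  Convex.norm_image_sub_le_of_norm_deriv_le (fun x _ => hf x) (fun x _ => hM x) convex_univ
    (mem_univ c) (mem_univ a)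

lemma sub_mul_sub_le_of_deriv_le (hf : Differentiable ℝ f) {lam : ℝ}
    (hneg : ∀ z, deriv f z ≤ -lam) (a c : ℝ) : (a - c) * (f a - f c) ≤ -lam * (a - c) ^ 2 := by
  wlog hca : c ≤ a generalizing a c
  · linear_combination this c a (le_of_not_ge hca)
  have := mul_le_mul_of_nonneg_left (image_sub_le_mul_sub_of_deriv_le hf hneg hca)
    (sub_nonneg.2 hca)
  linear_combination this

end Dissipative

lemma young_bound_of_dissipative {lam M D P g : ℝ} (hlam : 0 < lam) (hdiss : D * P ≤ -lam * D ^ 2)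
    (hP : |P| ≤ M * |D|) :
    lam * (D - g) ^ 2 + 2 * (D - g) * P ≤ (lam + (lam + M) ^ 2 / lam) * g ^ 2 := by
  have hgP : -(g * P) ≤ M * (|D| * |g|) := by
    calc -(g * P) ≤ |g| * |P| := by rw [← abs_mul]; exact neg_le_abs _
      _ ≤ |g| * (M * |D|) := mul_le_mul_of_nonneg_left hP (abs_nonneg g)
      _ = M * (|D| * |g|) := by ring
  have hDg : -(D * g) ≤ |D| * |g| := by rw [← abs_mul]; exact neg_le_abs _
  have hyoung : 2 * (lam + M) * (|D| * |g|) ≤ lam * D ^ 2 + (lam + M) ^ 2 / lam * g ^ 2 := by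
    have hsq : 0 ≤ (lam * |D| - (lam + M) * |g|) ^ 2 / lam := by positivity
    have hexp : (lam * |D| - (lam + M) * |g|) ^ 2 / lam
        = lam * D ^ 2 + (lam + M) ^ 2 / lam * g ^ 2 - 2 * (lam + M) * (|D| * |g|) := by
      field_simp
      rw [← sq_abs D, ← sq_abs g]
      ring
    linarith
  nlinarith

lemma sq_le_integral_of_dissipative {Y P g : ℝ → ℝ} {lam M t : ℝ} (hlam : 0 < lam) (ht : 0 ≤ t)
    (hY : ∀ s, HasDerivAt Y (P s) s) (hY0 : Y 0 = 0) (hg : Continuous g)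
    (hdiss : ∀ s ∈ Ioo 0 t, (Y s + g s) * P s ≤ -lam * (Y s + g s) ^ 2)
    (hP : ∀ s ∈ Ioo 0 t, |P s| ≤ M * |Y s + g s|) :
    Y t ^ 2 ≤
      (lam + (lam + M) ^ 2 / lam) * ∫ s in (0:ℝ)..t, exp (-(lam * (t - s))) * g s ^ 2 := by
  set K := lam + (lam + M) ^ 2 / lam
  have hwc : Continuous fun s => exp (lam * s) * g s ^ 2 := by fun_prop
  set F := fun s => exp (lam * s) * Y s ^ 2 - K * ∫ u in (0:ℝ)..s, exp (lam * u) * g u ^ 2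
  have hF : ∀ s, HasDerivAt F (exp (lam * s) * (lam * Y s ^ 2 + 2 * Y s * P s)
      - K * (exp (lam * s) * g s ^ 2)) s := by
    intro s
    have hexp : HasDerivAt (fun r => exp (lam * r)) (exp (lam * s) * lam) s := by
      simpa using ((hasDerivAt_id s).const_mul lam).exp
    refine ((hexp.fun_mul ((hY s).fun_pow 2)).fun_sub
      ((hwc.integral_hasStrictDerivAt 0 s).hasDerivAt.const_mul K)).congr_deriv ?_
    push_cast
    ring
  have hanti : AntitoneOn F (Icc 0 t) := by
    refine antitoneOn_of_deriv_nonpos (convex_Icc 0 t)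
      (fun s _ => (hF s).continuousAt.continuousWithinAt)
      (fun s _ => (hF s).differentiableAt.differentiableWithinAt) fun s hs => ?_
    rw [interior_Icc] at hs
    have hyoung := young_bound_of_dissipative (g := g s) hlam (hdiss s hs) (hP s hs)
    rw [add_sub_cancel_right] at hyoung
    rw [(hF s).deriv]
    linarith [mul_le_mul_of_nonneg_left hyoung (exp_pos (lam * s)).le]
  have hFt : F t ≤ F 0 := hanti (left_mem_Icc.2 ht) (right_mem_Icc.2 ht) ht
  have hF0 : F 0 = 0 := by simp [F, hY0]
  have hrescale : ∫ s in (0:ℝ)..t, exp (-(lam * (t - s))) * g s ^ 2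
      = exp (-(lam * t)) * ∫ s in (0:ℝ)..t, exp (lam * s) * g s ^ 2 := by
    rw [← intervalIntegral.integral_const_mul]
    refine intervalIntegral.integral_congr fun s _ => ?_
    rw [← mul_assoc, ← exp_add]
    ring_nf
  have hweighted :
      exp (lam * t) * Y t ^ 2 ≤ K * ∫ s in (0:ℝ)..t, exp (lam * s) * g s ^ 2 := by
    simp only [F] at hFt
    linarith
  calc Y t ^ 2 = exp (-(lam * t)) * (exp (lam * t) * Y t ^ 2) := by
        rw [← mul_assoc, ← exp_add, neg_add_cancel, exp_zero, one_mul]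
    _ ≤ _ := by
        rw [hrescale, mul_left_comm K]
        exact mul_le_mul_of_nonneg_left hweighted (exp_pos _).le

lemma abs_sub_le_of_integral_eq {f : ℝ → ℝ} {M lam : ℝ} (hlam : 0 < lam) (hf : Differentiable ℝ f)
    (hM : ∀ z, |deriv f z| ≤ M) (hneg : ∀ z, deriv f z ≤ -lam) {X Xbar h hbar : ℝ → ℝ} {x₀ t : ℝ}
    (hX : Continuous X) (hXbar : Continuous Xbar) (hh : Continuous h) (hhbar : Continuous hbar)
    (hXeq : ∀ s ≥ 0, X s = x₀ + (∫ u in (0:ℝ)..s, f (X u)) + h s)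
    (hXbareq : ∀ s ≥ 0, Xbar s = x₀ + (∫ u in (0:ℝ)..s, f (Xbar u)) + hbar s) (ht : 0 ≤ t) :
    |X t - Xbar t| ≤ |h t - hbar t| + √(lam + (lam + M) ^ 2 / lam) *
      √(∫ s in (0:ℝ)..t, exp (-(lam * (t - s))) * (h s - hbar s) ^ 2) := by
  have hfX : Continuous fun s => f (X s) := hf.continuous.comp hX
  have hfXbar : Continuous fun s => f (Xbar s) := hf.continuous.comp hXbar
  set Y := fun s => ∫ u in (0:ℝ)..s, (f (X u) - f (Xbar u))
  have hD : ∀ s ≥ 0, X s - Xbar s = Y s + (h s - hbar s) := by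
    intro s hs
    simp only [Y]
    rw [hXeq s hs, hXbareq s hs,
      intervalIntegral.integral_sub (hfX.intervalIntegrable 0 s) (hfXbar.intervalIntegrable 0 s)]
    ring
  have hY := sq_le_integral_of_dissipative hlam ht
    (fun s => ((hfX.sub hfXbar).integral_hasStrictDerivAt 0 s).hasDerivAt)
    intervalIntegral.integral_same (hh.sub hhbar)
    (fun s hs => hD s hs.1.le ▸ sub_mul_sub_le_of_deriv_le hf hneg _ _)
    (fun s hs => hD s hs.1.le ▸ abs_sub_le_of_abs_deriv_le hf hM _ _)
  have hYt : |Y t| ≤ √((lam + (lam + M) ^ 2 / lam) *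
      ∫ s in (0:ℝ)..t, exp (-(lam * (t - s))) * (h s - hbar s) ^ 2) := abs_le_sqrt hY
  rw [hD t ht, ← sqrt_mul (by positivity)]
  linarith [abs_add_le (Y t) (h t - hbar t)]

/-- Wong–Zakai stability through the Lamperti transformation: if `b^θ` is `C¹` with
`|(b^θ)'| ≤ M` and `(b^θ)' ≤ −λ₀ < 0`, then for flows `𝒳, 𝒳̄` of the transformed equation
driven pathwise by continuous paths `h, h̄` (vanishing at `0`) there are constants
`c, λ > 0`, depending only on `λ₀, M, σ₋, σ₊`, such that
`|θ⁻¹(𝒳_t(x)) − θ⁻¹(𝒳̄_t(x))| ≤ c(|h_t − h̄_t| + (∫_0^t e^{−2λ(t−s)}|h_s − h̄_s|² ds)^{1/2})`. -/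
theorem stmt_14 (σ b : ℝ → ℝ) (σm σp : ℝ) (hσm : 0 < σm) (hσc : Continuous σ)
    (hσb : ∀ y, σm ≤ σ y ∧ σ y ≤ σp)
    (M lam0 : ℝ) (hlam0 : 0 < lam0)
    (hbθ : ContDiff ℝ 1 (driftTheta b σ))
    (hM : ∀ z, |deriv (driftTheta b σ) z| ≤ M)
    (hneg : ∀ z, deriv (driftTheta b σ) z ≤ -lam0) :
    ∃ c > (0:ℝ), ∃ lam > (0:ℝ),
      ∀ (h hbar : ℝ → ℝ), Continuous h → Continuous hbar → h 0 = 0 → hbar 0 = 0 →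
      ∀ (𝒳 𝒳bar : ℝ → ℝ → ℝ),
        (∀ x, Continuous (fun t => 𝒳 t x)) →
        (∀ x, Continuous (fun t => 𝒳bar t x)) →
        (∀ x, ∀ t ≥ (0:ℝ),
          𝒳 t x = lamperti σ x + (∫ s in (0:ℝ)..t, driftTheta b σ (𝒳 s x)) + h t) →
        (∀ x, ∀ t ≥ (0:ℝ),
          𝒳bar t x = lamperti σ x + (∫ s in (0:ℝ)..t, driftTheta b σ (𝒳bar s x)) + hbar t) →
        ∀ t ≥ (0:ℝ), ∀ x : ℝ,
          |lampertiInv σ (𝒳 t x) - lampertiInv σ (𝒳bar t x)|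
            ≤ c * (|h t - hbar t|
                + Real.sqrt (∫ s in (0:ℝ)..t, Real.exp (-(2*lam*(t-s))) * |h s - hbar s|^2)) := by
  have hσpos : ∀ y, 0 < σ y := fun y => hσm.trans_le (hσb y).1
  have hσp : 0 < σp := (hσpos 0).trans_le (hσb 0).2
  set K := lam0 + (lam0 + M) ^ 2 / lam0
  refine ⟨σp * (1 + √K), by positivity, lam0 / 2, by positivity, ?_⟩
  intro h hbar hh hhbar _ _ 𝒳 𝒳bar hXc hXbc hX hXbar t ht x
  simp only [sq_abs, mul_div_cancel₀ lam0 two_ne_zero]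
  set J := ∫ s in (0:ℝ)..t, exp (-(lam0 * (t - s))) * (h s - hbar s) ^ 2
  have hflow : |𝒳 t x - 𝒳bar t x| ≤ |h t - hbar t| + √K * √J :=
    abs_sub_le_of_integral_eq hlam0 (hbθ.differentiable one_ne_zero) hM hneg (hXc x) (hXbc x)
      hh hhbar (hX x) (hXbar x) ht
  calc |lampertiInv σ (𝒳 t x) - lampertiInv σ (𝒳bar t x)|
      ≤ σp * |𝒳 t x - 𝒳bar t x| := abs_lampertiInv_sub_le hσc hσpos (fun y => (hσb y).2) _ _
    _ ≤ σp * (|h t - hbar t| + √K * √J) := by gcongr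
    _ ≤ σp * (1 + √K) * (|h t - hbar t| + √J) := by
        nlinarith [mul_nonneg hσp.le (sqrt_nonneg J),
          mul_nonneg (mul_nonneg hσp.le (sqrt_nonneg K)) (abs_nonneg (h t - hbar t))]
end
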